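/- arXiv:1008.4317 — 9 statements merged into one kernel-verified Lean document; each statement's English description precedes it below -/
import Mathlib

section
/- Let K and L be finite fields such that L is a field extension of K of degree m + 1 (m ≥ 1), viewed as a K-vector space. For a unit g ∈ Lˣ and a nonzero element x ∈ L, the map of the projectivization P(L) induced by multiplication by g fixes the point [x] determined by x if and only if g lies in the image of Kˣ under the algebra map. Consequently, the cyclic quotient Lˣ⧸Kˣ acts simply transitively (regularly) on the points of P^m(F_n). -/
/-!
Nonzero `v, w ∈ L` span the same `K`-line iff `v = k • w` for some `k ∈ Kˣ`. Taking `v = g * x`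
and cancelling `x ≠ 0` shows that `g` fixes `[x]` exactly when `g ∈ Kˣ`; and `w / v` sends
`[v]` to `[w]`, so the action of `Lˣ` is transitive with stabilisers `Kˣ`.
-/

open scoped LinearAlgebra.Projectivization

open Projectivization LinearMap

theorem LinearMap.mulLeft_units_injective (R : Type*) {A : Type*} [CommSemiring R] [Semiring A]
    [Algebra R A] (g : Aˣ) : Function.Injective (LinearMap.mulLeft R (g : A)) :=
  fun _ _ h => g.isUnit.mul_left_cancel h

section Singer

variable {K L : Type*} [Field K] [Field L] [Algebra K L]

theorem Projectivization.map_mulLeft_mk (g : Lˣ) (x : L) (hx : x ≠ 0) :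
    map (LinearMap.mulLeft K (g : L)) (mulLeft_units_injective K g) (mk K x hx) =
      mk K ((g : L) * x) (mul_ne_zero g.ne_zero hx) :=
  rfl

theorem Projectivization.mk_mul_eq_mk_iff (g x : L) (hx : x ≠ 0) (hgx : g * x ≠ 0) :
    mk K (g * x) hgx = mk K x hx ↔ ∃ k : Kˣ, algebraMap K L k = g := by
  simp only [mk_eq_mk_iff, Units.smul_def, Algebra.smul_def]
  exact exists_congr fun k => ⟨fun h => mul_right_cancel₀ hx h, fun h => h ▸ rfl⟩

theorem Projectivization.exists_map_mulLeft_eq (x y : ℙ K L) :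
    ∃ g : Lˣ, map (LinearMap.mulLeft K (g : L)) (mulLeft_units_injective K g) x = y := by
  induction x using Projectivization.ind with | h v hv =>
  induction y using Projectivization.ind with | h w hw =>
  refine ⟨Units.mk0 (w / v) (div_ne_zero hw hv), ?_⟩
  rw [map_mulLeft_mk]
  simp only [Units.val_mk0, div_mul_cancel₀ _ hv]

theorem Projectivization.mul_inv_mem_range_of_map_mulLeft_eq (g g' : Lˣ) (x : ℙ K L)
    (h : map (LinearMap.mulLeft K (g' : L)) (mulLeft_units_injective K g') x =
      map (LinearMap.mulLeft K (g : L)) (mulLeft_units_injective K g) x) :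
    g' * g⁻¹ ∈ (Units.map (algebraMap K L).toMonoidHom).range := by
  rw [← x.mk_rep, map_mulLeft_mk, map_mulLeft_mk] at h
  have hgx : ((g' * g⁻¹ : Lˣ) : L) * (g * x.rep) = g' * x.rep := by
    simp [mul_assoc]
  simp only [← hgx, mk_mul_eq_mk_iff] at h
  obtain ⟨k, hk⟩ := h
  exact ⟨k, Units.ext hk⟩

end Singer

theorem stmt_2 (K L : Type*) [Field K] [Field L]
    [Algebra K L] :
    (∀ (g : Lˣ) (x : L) (hx : x ≠ 0),
      Projectivization.map (LinearMap.mulLeft K (g : L))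
          (fun a b hab => by
            simpa using mul_left_cancel₀ (Units.ne_zero g) (by simpa using hab))
          (Projectivization.mk K x hx) = Projectivization.mk K x hx ↔
        ∃ k : Kˣ, algebraMap K L (k : K) = (g : L)) ∧
    (∀ x y : ℙ K L, ∃ g : Lˣ,
      Projectivization.map (LinearMap.mulLeft K (g : L))
          (fun a b hab => by
            simpa using mul_left_cancel₀ (Units.ne_zero g) (by simpa using hab)) x = y ∧
      ∀ g' : Lˣ,
        Projectivization.map (LinearMap.mulLeft K (g' : L))
            (fun a b hab => by
              simpa using mul_left_cancel₀ (Units.ne_zero g') (by simpa using hab)) x = y →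
          g' * g⁻¹ ∈ (Units.map (algebraMap K L).toMonoidHom).range) := by
  refine ⟨fun g x hx => mk_mul_eq_mk_iff _ _ hx _, fun x y => ?_⟩
  obtain ⟨g, hg⟩ := exists_map_mulLeft_eq (K := K) x y
  exact ⟨g, hg, fun g' hg' => mul_inv_mem_range_of_map_mulLeft_eq g g' x (hg'.trans hg.symm)⟩
end

section
/- Let K and L be finite fields such that L is a field extension of K of degree m + 1 (m ≥ 1), viewed as a K-vector space. For any two K-subspaces W₁, W₂ of L with finrank K W₁ = finrank K W₂ = m (i.e., any two hyperplanes of the projective space P^m(F_n)), there exists a unit g ∈ Lˣ such that the image of W₁ under the K-linear map 'multiplication by g' equals W₂. In other words, Lˣ acts transitively on the hyperplanes of P^m(F_n). -/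
/-!
A hyperplane of `L` over `K` is the kernel of a nonzero functional `f`. Since `L` is a field,
`a ↦ f ∘ (a * ·)` is an injective `K`-linear map `L → Dual K L`, hence bijective by counting
dimensions. So any two nonzero functionals differ by precomposition with multiplication by a
unit `g`, and multiplication by `g` then carries the one kernel onto the other.
-/

open Module LinearMap

theorem Submodule.exists_dual_ne_zero_ker_eq {K V : Type*} [Field K] [AddCommGroup V]
    [Module K V] [FiniteDimensional K V] (W : Submodule K V)
    (hW : finrank K W + 1 = finrank K V) : ∃ f : Dual K V, f ≠ 0 ∧ ker f = W := by
  have hq : finrank K (V ⧸ W) = finrank K K := by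
    have := W.finrank_quotient_add_finrank
    rw [finrank_self]
    omega
  let e : (V ⧸ W) ≃ₗ[K] K := LinearEquiv.ofFinrankEq _ _ hq
  exact ⟨e ∘ₗ W.mkQ, ne_zero_of_surjective (e.surjective.comp W.mkQ_surjective),
    by rw [LinearEquiv.ker_comp, ker_mkQ]⟩

section FieldExtension

variable {K L : Type*} [Field K] [Field L] [Algebra K L]

theorem Module.Dual.injective_comp_mulLeft {f : Dual K L} (hf : f ≠ 0) :
    Function.Injective ((llcomp K L L K f) ∘ₗ LinearMap.mul K L) := by
  rw [← ker_eq_bot, ker_eq_bot']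
  intro a ha
  by_contra ha0
  refine hf (LinearMap.ext fun y => ?_)
  simpa [mul_inv_cancel_left₀ ha0] using LinearMap.congr_fun ha (a⁻¹ * y)

theorem Module.Dual.surjective_comp_mulLeft [FiniteDimensional K L] {f : Dual K L}
    (hf : f ≠ 0) : Function.Surjective ((llcomp K L L K f) ∘ₗ LinearMap.mul K L) :=
  (injective_iff_surjective_of_finrank_eq_finrank Subspace.dual_finrank_eq.symm).mp
    (injective_comp_mulLeft hf)

theorem Module.Dual.exists_unit_comp_mulLeft_eq [FiniteDimensional K L] {f₁ f₂ : Dual K L}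
    (hf₁ : f₁ ≠ 0) (hf₂ : f₂ ≠ 0) : ∃ g : Lˣ, f₂ ∘ₗ mulLeft K (g : L) = f₁ := by
  obtain ⟨a, ha⟩ := surjective_comp_mulLeft hf₂ f₁
  have ha0 : a ≠ 0 := by
    rintro rfl
    exact hf₁ (by rw [← ha]; ext; simp)
  exact ⟨Units.mk0 a ha0, ha⟩

theorem map_mulLeft_ker_comp_mulLeft (f : Dual K L) (g : Lˣ) :
    Submodule.map (mulLeft K (g : L)) (ker (f ∘ₗ mulLeft K (g : L))) = ker f := by
  rw [ker_comp]
  exact Submodule.map_comap_eq_of_surjective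
    (fun y => ⟨((g⁻¹ : Lˣ) : L) * y, by simp [mulLeft_apply]⟩) _

end FieldExtension

theorem stmt_3_general (K L : Type*) [Field K] [Field L]
    [Algebra K L] (m : ℕ) (hd : Module.finrank K L = m + 1)
    (W₁ W₂ : Submodule K L)
    (hW₁ : Module.finrank K W₁ = m) (hW₂ : Module.finrank K W₂ = m) :
    ∃ g : Lˣ, Submodule.map (LinearMap.mulLeft K (g : L)) W₁ = W₂ := by
  have : FiniteDimensional K L := Module.finite_of_finrank_pos (by omega)
  obtain ⟨f₁, hf₁, rfl⟩ := W₁.exists_dual_ne_zero_ker_eq (by omega)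
  obtain ⟨f₂, hf₂, rfl⟩ := W₂.exists_dual_ne_zero_ker_eq (by omega)
  obtain ⟨g, rfl⟩ := Dual.exists_unit_comp_mulLeft_eq hf₁ hf₂
  exact ⟨g, map_mulLeft_ker_comp_mulLeft f₂ g⟩

/-- The Singer group `Lˣ` acts transitively on the hyperplanes of the projective space
`ℙ^m(𝔽_n)`: for any two `K`-subspaces `W₁, W₂` of `L` of dimension `m`, some unit `g ∈ Lˣ`
maps `W₁` onto `W₂` by multiplication. -/
theorem stmt_3 (K L : Type*) [Field K] [Field L] [Fintype K] [Fintype L]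
    [Algebra K L] (m : ℕ) (hm : 1 ≤ m) (hd : Module.finrank K L = m + 1)
    (W₁ W₂ : Submodule K L)
    (hW₁ : Module.finrank K W₁ = m) (hW₂ : Module.finrank K W₂ = m) :
    ∃ g : Lˣ, Submodule.map (LinearMap.mulLeft K (g : L)) W₁ = W₂ :=
  stmt_3_general K L m hd W₁ W₂ hW₁ hW₂
end

section
/- Let p be a prime, e ≥ 1, n = p^e, and m ≥ 2. Set ℓ = (n^(m+1) − 1)/(n − 1), q = (n^m − 1)/(n − 1) and λ = (n^(m−1) − 1)/(n − 1). Then there exists a finset D of ZMod ℓ which is an (ℓ, q, λ)-difference set (i.e., D has cardinality q and for every nonzero α ∈ ZMod ℓ the number of ordered pairs (x, y) ∈ D × D with x − y = α equals λ) and which is fixed by the Frobenius automorphism, meaning that the image of D under the map x ↦ p·x equals D. -/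
open Finset Polynomial

/-! Auxiliary lemmas for the Singer difference set construction. -/

private lemma geom_nat' (n k : ℕ) (hn : 1 ≤ n) :
    (n - 1) * ∑ i ∈ Finset.range k, n ^ i + 1 = n ^ k := by
  obtain ⟨d, rfl⟩ : ∃ d, n = d + 1 := ⟨n - 1, by omega⟩
  induction k with
  | zero => simp
  | succ k ih =>
    rw [Finset.sum_range_succ, Nat.mul_add, pow_succ]
    set S := ∑ i ∈ Finset.range k, (d + 1) ^ i
    simp only [Nat.add_sub_cancel] at *
    nlinarith [ih]

private lemma card_pow_units (G : Type) [Group G] [Fintype G] [DecidableEq G] [IsCyclic G]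
    (d : ℕ) (hd : d ∣ Fintype.card G) (hd0 : 0 < d) :
    (Finset.univ.filter fun w : G => w ^ d = 1).card = d := by
  classical
  refine le_antisymm (IsCyclic.card_pow_eq_one_le hd0) ?_
  obtain ⟨g, hg⟩ := IsCyclic.exists_generator (α := G)
  have hord : orderOf g = Fintype.card G :=
    (orderOf_eq_card_of_forall_mem_zpowers hg).trans Nat.card_eq_fintype_card
  set N := Fintype.card G
  have hNd : N / d ∣ N := Nat.div_dvd_of_dvd hd
  have hN0 : 0 < N := Fintype.card_pos
  have hord2 : orderOf (g ^ (N / d)) = d := by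
    rw [orderOf_pow, hord, Nat.gcd_eq_right hNd, Nat.div_div_self hd hN0.ne']
  have h1 : (g ^ (N / d)) ^ d = 1 := by
    rw [← pow_mul, Nat.div_mul_cancel hd, ← hord, pow_orderOf_eq_one]
  have hsub : ∀ x ∈ Subgroup.zpowers (g ^ (N / d)), x ^ d = 1 := by
    intro x hx
    obtain ⟨k, rfl⟩ := Subgroup.mem_zpowers_iff.mp hx
    rw [← zpow_natCast ((g ^ (N / d)) ^ k) d, ← zpow_mul, mul_comm, zpow_mul, zpow_natCast, h1,
      one_zpow]
  calc d = ((Subgroup.zpowers (g ^ (N / d)) : Set G).toFinset).card := by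
        rw [Set.toFinset_card]
        rw [show Fintype.card ((Subgroup.zpowers (g ^ (N / d)) : Set G))
            = Nat.card (Subgroup.zpowers (g ^ (N / d))) from (Nat.card_eq_fintype_card).symm,
          Nat.card_zpowers, hord2]
    _ ≤ _ := by
        apply Finset.card_le_card
        intro x hx
        simp only [Set.mem_toFinset, SetLike.mem_coe] at hx
        simp only [Finset.mem_filter, Finset.mem_univ, true_and]
        exact hsub x hx

section Singer

variable {F : Type} [Field F] (p e m : ℕ) [Fact p.Prime] [CharP F p]

/-- The subfield of elements fixed by the `e`-th power of Frobenius. -/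
private def sK (F : Type) [Field F] (p e : ℕ) [Fact p.Prime] [CharP F p] : Subfield F where
  carrier := {x | x ^ p ^ e = x}
  mul_mem' := by intro a b ha hb; simp only [Set.mem_setOf_eq] at *; rw [mul_pow, ha, hb]
  one_mem' := by simp
  add_mem' := by intro a b ha hb; simp only [Set.mem_setOf_eq] at *; rw [add_pow_char_pow, ha, hb]
  zero_mem' := by
    simp only [Set.mem_setOf_eq]
    exact zero_pow (pow_ne_zero _ (Fact.out : p.Prime).ne_zero)
  neg_mem' := by
    intro a ha; simp only [Set.mem_setOf_eq] at *
    have := map_neg (iterateFrobenius F p e) a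
    simpa [iterateFrobenius_def, ha] using this
  inv_mem' := by
    intro a ha; simp only [Set.mem_setOf_eq] at *; rw [inv_pow, ha]

private lemma mem_sK {x : F} : x ∈ sK F p e ↔ x ^ p ^ e = x := Iff.rfl

private lemma sK_pow {k : F} (hk : k ∈ sK F p e) (i : ℕ) : k ^ p ^ (e * i) = k := by
  induction i with
  | zero => simp
  | succ i ih => rw [Nat.mul_succ, pow_add, pow_mul, ih]; exact hk

/-- The relative trace map down to the subfield. -/
private def trF (F : Type) [Field F] (p e m : ℕ) : F → F :=
  fun x => ∑ i ∈ Finset.range (m + 1), x ^ p ^ (e * i)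

private lemma trF_add (x y : F) : trF F p e m (x + y) = trF F p e m x + trF F p e m y := by
  unfold trF
  rw [← Finset.sum_add_distrib]
  exact Finset.sum_congr rfl fun i _ => add_pow_char_pow ..

private lemma trF_zero : trF F p e m (0 : F) = 0 := by
  unfold trF
  refine Finset.sum_eq_zero fun i _ => ?_
  exact zero_pow (pow_ne_zero _ (Fact.out : p.Prime).ne_zero)

private lemma trF_neg (x : F) : trF F p e m (-x) = - trF F p e m x := by
  have h := trF_add p e m x (-x)
  rw [add_neg_cancel, trF_zero] at h
  exact eq_neg_of_add_eq_zero_right h.symm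

private lemma trF_mul_K {k : F} (hk : k ∈ sK F p e) (x : F) :
    trF F p e m (k * x) = k * trF F p e m x := by
  unfold trF
  rw [Finset.mul_sum]
  exact Finset.sum_congr rfl fun i _ => by rw [mul_pow, sK_pow p e hk i]

private lemma trF_pow_p (x : F) : trF F p e m (x ^ p) = trF F p e m x ^ p := by
  unfold trF
  rw [sum_pow_char]
  exact Finset.sum_congr rfl fun i _ => by rw [← pow_mul, ← pow_mul, mul_comm]

variable [Fintype F]

private lemma trF_mem_sK (hcard : Fintype.card F = p ^ (e * (m + 1))) (x : F) :
    trF F p e m x ∈ sK F p e := by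
  rw [mem_sK]
  have h1 : trF F p e m x ^ p ^ e = ∑ i ∈ Finset.range (m + 1), x ^ p ^ (e * (i + 1)) := by
    unfold trF
    rw [sum_pow_char_pow]
    exact Finset.sum_congr rfl fun i _ => by
      rw [← pow_mul, ← pow_add, Nat.mul_succ]
  rw [h1]
  have h2 : ∀ y : F, y ^ p ^ (e * (m + 1)) = y := by
    intro y; rw [← hcard]; exact FiniteField.pow_card y
  have h3 : ∑ i ∈ Finset.range (m + 1 + 1), x ^ p ^ (e * i)
      = trF F p e m x + x ^ p ^ (e * (m + 1)) := by
    rw [Finset.sum_range_succ]; rfl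
  have h4 : ∑ i ∈ Finset.range (m + 1 + 1), x ^ p ^ (e * i)
      = x + ∑ i ∈ Finset.range (m + 1), x ^ p ^ (e * (i + 1)) := by
    rw [Finset.sum_range_succ']; simp [add_comm]
  rw [h2] at h3
  have h5 := h3.symm.trans h4
  unfold trF at h5 ⊢
  rw [add_comm] at h5
  exact (add_left_cancel h5).symm

private lemma units_pow_sub_one_iff (he : 1 ≤ e) (w : Fˣ) :
    w ^ (p ^ e - 1) = 1 ↔ (w : F) ^ p ^ e = (w : F) := by
  have hn : 1 ≤ p ^ e := Nat.one_le_pow _ _ (Fact.out : p.Prime).pos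
  constructor
  · intro h
    have : ((w : F)) ^ (p ^ e - 1) = 1 := by
      rw [← Units.val_pow_eq_pow_val, h, Units.val_one]
    calc (w : F) ^ p ^ e = (w : F) ^ (p ^ e - 1) * w := by
          rw [← pow_succ, Nat.sub_add_cancel hn]
      _ = (w : F) := by rw [this, one_mul]
  · intro h
    have h' : ((w : F)) ^ (p ^ e - 1) * w = 1 * (w : F) := by
      rw [← pow_succ, Nat.sub_add_cancel hn, h, one_mul]
    have := mul_right_cancel₀ (Units.ne_zero w) h'
    ext
    rw [Units.val_pow_eq_pow_val, this, Units.val_one]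

private lemma card_fixed_pts [DecidableEq F] (he : 1 ≤ e) (hm : 1 ≤ m)
    (hcard : Fintype.card F = p ^ (e * (m + 1))) :
    (Finset.univ.filter fun x : F => x ^ p ^ e = x).card = p ^ e := by
  classical
  have hp2 : 2 ≤ p := (Fact.out : p.Prime).two_le
  have hn2 : 2 ≤ p ^ e := by
    calc 2 = 2 ^ 1 := rfl
    _ ≤ p ^ e := Nat.pow_le_pow_left hp2 1 |>.trans (Nat.pow_le_pow_right (by omega) he)
  set n := p ^ e with hn
  have hcu : Fintype.card Fˣ = n ^ (m + 1) - 1 := by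
    rw [Fintype.card_units, hcard, hn, ← pow_mul]
  have hdvd : (n - 1) ∣ n ^ (m + 1) - 1 := by
    have h := geom_nat' n (m + 1) (by omega)
    refine ⟨∑ i ∈ Finset.range (m + 1), n ^ i, ?_⟩
    set T := (n - 1) * ∑ i ∈ Finset.range (m + 1), n ^ i with hT
    omega
  have hW : (Finset.univ.filter fun w : Fˣ => w ^ (n - 1) = 1).card = n - 1 := by
    rw [card_pow_units Fˣ (n - 1) (by rw [hcu]; exact hdvd) (by omega)]
  have hB : (Finset.univ.filter fun x : F => x ≠ 0 ∧ x ^ n = x).card = n - 1 := by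
    rw [← hW]
    apply Finset.card_bij (fun x hx => Units.mk0 x (by simp at hx; exact hx.1))
    · intro x hx
      simp only [Finset.mem_filter, Finset.mem_univ, true_and] at hx ⊢
      rw [units_pow_sub_one_iff p e he]
      simpa using hx.2
    · intro a ha b hb h
      simpa using congrArg Units.val h
    · intro w hw
      simp only [Finset.mem_filter, Finset.mem_univ, true_and] at hw
      refine ⟨(w : F), ?_, by simp⟩
      simp only [Finset.mem_filter, Finset.mem_univ, true_and]
      exact ⟨Units.ne_zero w, (units_pow_sub_one_iff p e he w).mp hw⟩
  have hsplit : (Finset.univ.filter fun x : F => x ^ n = x)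
      = insert (0 : F) (Finset.univ.filter fun x : F => x ≠ 0 ∧ x ^ n = x) := by
    ext x
    simp only [Finset.mem_filter, Finset.mem_univ, true_and, Finset.mem_insert]
    constructor
    · intro h
      by_cases hx : x = 0
      · exact Or.inl hx
      · exact Or.inr ⟨hx, h⟩
    · rintro (rfl | ⟨_, h⟩)
      · exact zero_pow (by omega)
      · exact h
  rw [hsplit, Finset.card_insert_of_notMem (by simp), hB]
  omega

private lemma card_trF_ker [DecidableEq F] (he : 1 ≤ e) (hm : 1 ≤ m)
    (hcard : Fintype.card F = p ^ (e * (m + 1))) :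
    (Finset.univ.filter fun x : F => trF F p e m x = 0).card = p ^ (e * m) := by
  classical
  set n := p ^ e with hn
  have hp2 : 2 ≤ p := (Fact.out : p.Prime).two_le
  have hn2 : 2 ≤ n := by
    have h1 : p ^ 1 ≤ p ^ e := Nat.pow_le_pow_right (by omega) he
    have h2 : p ^ 1 = p := pow_one p
    omega
  set P : F[X] := ∑ i ∈ Finset.range (m + 1), X ^ p ^ (e * i) with hP
  have hPeval : ∀ x : F, P.eval x = trF F p e m x := by
    intro x; rw [hP, eval_finset_sum]; simp [trF]
  have hPne : P ≠ 0 := by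
    intro h
    have hc : P.coeff 1 = 1 := by
      rw [hP, finset_sum_coeff]
      rw [Finset.sum_eq_single 0]
      · simp
      · intro i hi hine
        rw [coeff_X_pow]
        have h3 : p ^ (e * i) ≠ 1 := by
          have h4 : 1 ≤ e * i := by
            have : 1 ≤ i := Nat.one_le_iff_ne_zero.mpr hine
            exact le_trans (by omega) (Nat.mul_le_mul he this)
          have h5 : p ^ 1 ≤ p ^ (e * i) := Nat.pow_le_pow_right (by omega) h4
          have h6 : p ^ 1 = p := pow_one p
          omega
        simp [Ne.symm h3]
      · simp
    rw [h] at hc; simp at hc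
  have hdeg : P.natDegree ≤ p ^ (e * m) := by
    apply Polynomial.natDegree_sum_le_of_forall_le
    intro i hi
    rw [natDegree_X_pow]
    apply Nat.pow_le_pow_right (by omega)
    exact Nat.mul_le_mul_left e (by simp at hi; omega)
  set S0 := Finset.univ.filter fun x : F => trF F p e m x = 0 with hS0
  have hker_le : S0.card ≤ p ^ (e * m) := by
    have hsub : S0 ⊆ P.roots.toFinset := by
      intro x hx
      simp only [hS0, Finset.mem_filter, Finset.mem_univ, true_and] at hx
      rw [Multiset.mem_toFinset, mem_roots hPne]
      rw [IsRoot.def, hPeval, hx]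
    calc S0.card ≤ P.roots.toFinset.card := Finset.card_le_card hsub
      _ ≤ Multiset.card P.roots := Multiset.toFinset_card_le _
      _ ≤ P.natDegree := card_roots' P
      _ ≤ p ^ (e * m) := hdeg
  set R := Finset.univ.image (trF F p e m) with hR
  have hR_le : R.card ≤ n := by
    have hsub : R ⊆ Finset.univ.filter fun x : F => x ^ p ^ e = x := by
      intro y hy
      simp only [hR, Finset.mem_image] at hy
      obtain ⟨x, _, rfl⟩ := hy
      simp only [Finset.mem_filter, Finset.mem_univ, true_and]
      exact (mem_sK p e).mp (trF_mem_sK p e m hcard x)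
    calc R.card ≤ _ := Finset.card_le_card hsub
      _ = n := card_fixed_pts p e m he hm hcard
  have hfib : ∀ y ∈ R, (Finset.univ.filter fun x : F => trF F p e m x = y).card = S0.card := by
    intro y hy
    simp only [hR, Finset.mem_image] at hy
    obtain ⟨x0, _, rfl⟩ := hy
    apply Finset.card_bij (fun x _ => x - x0)
    · intro x hx
      simp only [Finset.mem_filter, Finset.mem_univ, true_and, hS0] at hx ⊢
      rw [sub_eq_add_neg, trF_add, trF_neg, hx, add_neg_cancel]
    · intro a _ b _ h; exact sub_left_inj.mp h
    · intro z hz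
      simp only [Finset.mem_filter, Finset.mem_univ, true_and, hS0] at hz ⊢
      exact ⟨z + x0, by rw [trF_add, hz, zero_add], by ring⟩
  have htotal : Fintype.card F = R.card * S0.card := by
    have h := Finset.card_eq_sum_card_fiberwise (s := Finset.univ) (t := R) (f := trF F p e m)
      (fun x _ => Finset.mem_image_of_mem _ (Finset.mem_univ x))
    rw [Finset.card_univ] at h
    rw [h, Finset.sum_congr rfl hfib, Finset.sum_const, smul_eq_mul]
  have h1 : R.card * S0.card = n * p ^ (e * m) := by
    rw [← htotal, hcard, show e * (m + 1) = e + e * m by ring, pow_add]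
  by_contra hne
  have hlt : S0.card < p ^ (e * m) := by omega
  have : R.card * S0.card < n * p ^ (e * m) :=
    lt_of_le_of_lt (Nat.mul_le_mul_right _ hR_le)
      ((Nat.mul_lt_mul_left (show 0 < n by omega)).mpr hlt)
  omega

/-- The stabilizer subfield of the trace-zero hyperplane. -/
private def sL (F : Type) [Field F] [Fintype F] (p e m : ℕ) [Fact p.Prime] [CharP F p] :
    Subfield F where
  carrier := {z | ∀ x : F, trF F p e m x = 0 → trF F p e m (z * x) = 0}
  mul_mem' := by
    intro a b ha hb x hx
    rw [mul_assoc]; exact ha _ (hb _ hx)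
  one_mem' := by intro x hx; rwa [one_mul]
  add_mem' := by
    intro a b ha hb x hx
    rw [add_mul, trF_add, ha _ hx, hb _ hx, add_zero]
  zero_mem' := by intro x hx; rw [zero_mul]; exact trF_zero p e m
  neg_mem' := by
    intro a ha x hx
    rw [neg_mul, trF_neg, ha _ hx, neg_zero]
  inv_mem' := by
    classical
    intro z hz
    by_cases hz0 : z = 0
    · intro x hx; rw [hz0, inv_zero, zero_mul]; exact trF_zero p e m
    · intro x hx
      set S0 := Finset.univ.filter fun y : F => trF F p e m y = 0 with hS0
      have himg : S0.image (fun y => z * y) = S0 := by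
        apply Finset.eq_of_subset_of_card_le
        · intro t ht
          simp only [Finset.mem_image] at ht
          obtain ⟨y, hy, rfl⟩ := ht
          simp only [hS0, Finset.mem_filter, Finset.mem_univ, true_and] at hy ⊢
          exact hz _ hy
        · rw [Finset.card_image_of_injective _ (mul_right_injective₀ hz0)]
      have hxS : x ∈ S0 := by
        simp only [hS0, Finset.mem_filter, Finset.mem_univ, true_and]; exact hx
      rw [← himg, Finset.mem_image] at hxS
      obtain ⟨y, hy, hzy⟩ := hxS
      simp only [hS0, Finset.mem_filter, Finset.mem_univ, true_and] at hy
      have : z⁻¹ * x = y := by rw [← hzy]; field_simp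
      rw [this]; exact hy

private lemma stab_mem_sK [DecidableEq F] (he : 1 ≤ e) (hm : 1 ≤ m)
    (hcard : Fintype.card F = p ^ (e * (m + 1)))
    (c : F) (hstab : ∀ x : F, trF F p e m x = 0 → trF F p e m (c * x) = 0) :
    c ∈ sK F p e := by
  classical
  have hp2 : 2 ≤ p := (Fact.out : p.Prime).two_le
  have hn2 : 2 ≤ p ^ e := by
    have h1 : p ^ 1 ≤ p ^ e := Nat.pow_le_pow_right (by omega) he
    have h2 : p ^ 1 = p := pow_one p
    omega
  set L := sL F p e m with hL
  have hKL : (sK F p e : Set F) ⊆ (L : Set F) := by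
    intro k hk x hx
    rw [trF_mul_K p e m hk, hx, mul_zero]
  have hcardK : Fintype.card (sK F p e) = p ^ e := by
    rw [Fintype.card_of_subtype (Finset.univ.filter fun x : F => x ^ p ^ e = x)
      (fun x => by simp [mem_sK p e])]
    exact card_fixed_pts p e m he hm hcard
  let HL : Submodule L F :=
    { carrier := {x | trF F p e m x = 0}
      add_mem' := fun {a b} ha hb => by
        simp only [Set.mem_setOf_eq] at *
        rw [trF_add, ha, hb, add_zero]
      zero_mem' := trF_zero p e m
      smul_mem' := fun z x hx => z.2 x hx }
  haveI : Module.Finite L F := Module.Finite.of_finite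
  have hcardF_L : Fintype.card F = Fintype.card L ^ Module.finrank L F :=
    Module.card_eq_pow_finrank
  haveI : Fintype HL := Fintype.ofFinite _
  have hcardHL : Fintype.card HL = p ^ (e * m) := by
    rw [Fintype.card_of_subtype (Finset.univ.filter fun x : F => trF F p e m x = 0)
      (fun x => by simp only [Finset.mem_filter, Finset.mem_univ, true_and]; rfl)]
    exact card_trF_ker p e m he hm hcard
  have hcardHL_L : Fintype.card HL = Fintype.card L ^ Module.finrank L HL :=
    Module.card_eq_pow_finrank
  have hcardL_ge : p ^ e ≤ Fintype.card L := by
    rw [← hcardK]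
    exact Fintype.card_le_of_injective (Set.inclusion hKL) (Set.inclusion_injective hKL)
  set cL := Fintype.card L with hcL
  set a := Module.finrank L HL with ha
  set b := Module.finrank L F with hb
  have hF : cL ^ b = p ^ (e * (m + 1)) := by rw [← hcardF_L, hcard]
  have hH : cL ^ a = p ^ (e * m) := by rw [← hcardHL_L, hcardHL]
  have hcL2 : 2 ≤ cL := le_trans hn2 hcardL_ge
  have hane : a ≠ 0 := by
    intro h
    rw [h, pow_zero] at hH
    have : 2 ≤ p ^ (e * m) := by
      calc 2 ≤ p ^ e := hn2
      _ ≤ p ^ (e * m) := Nat.pow_le_pow_right (by omega) (Nat.le_mul_of_pos_right e (by omega))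
    omega
  have hab : a < b := by
    have h1 : cL ^ a < cL ^ b := by
      rw [hF, hH]
      exact Nat.pow_lt_pow_right (by omega) (by nlinarith)
    exact (Nat.pow_lt_pow_iff_right (by omega)).mp h1
  have hkey : cL ^ (b - a) = p ^ e := by
    have h1 : cL ^ a * cL ^ (b - a) = cL ^ a * p ^ e := by
      rw [← pow_add, Nat.add_sub_cancel' (le_of_lt hab), hF, hH,
        ← pow_add, show e * m + e = e * (m + 1) by ring]
    exact Nat.eq_of_mul_eq_mul_left (by positivity) h1
  have hcardL_le : cL ≤ p ^ e := by
    calc cL = cL ^ 1 := (pow_one cL).symm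
    _ ≤ cL ^ (b - a) := Nat.pow_le_pow_right (by omega) (by omega)
    _ = p ^ e := hkey
  have hcardL : cL = p ^ e := le_antisymm hcardL_le hcardL_ge
  have hsetseq : (sK F p e : Set F) = (L : Set F) := by
    refine Set.eq_of_subset_of_ncard_le hKL ?_ (Set.toFinite _)
    rw [← Nat.card_coe_set_eq, ← Nat.card_coe_set_eq,
      Nat.card_eq_fintype_card, Nat.card_eq_fintype_card]
    have e1 : Fintype.card (L : Set F) = cL := Fintype.card_congr (Equiv.refl _)
    have e2 : Fintype.card (sK F p e : Set F) = p ^ e := by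
      rw [← hcardK]; exact Fintype.card_congr (Equiv.refl _)
    rw [e1, e2, hcardL]
  have : c ∈ (L : Set F) := hstab
  rw [← hsetseq] at this
  exact this

set_option maxHeartbeats 2000000 in
private lemma card_inter [DecidableEq F] (he : 1 ≤ e) (hm : 1 ≤ m)
    (hcard : Fintype.card F = p ^ (e * (m + 1))) (c : F) (hc0 : c ≠ 0)
    (hcK : c ∉ sK F p e) :
    (Finset.univ.filter fun x : F =>
      trF F p e m x = 0 ∧ trF F p e m (c * x) = 0).card = p ^ (e * (m - 1)) := by
  classical
  have hp2 : 2 ≤ p := (Fact.out : p.Prime).two_le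
  set K := sK F p e with hK
  have hcardK : Fintype.card K = p ^ e := by
    rw [Fintype.card_of_subtype (Finset.univ.filter fun x : F => x ^ p ^ e = x)
      (fun x => by simp [hK, mem_sK p e])]
    exact card_fixed_pts p e m he hm hcard
  haveI : Module.Finite K F := Module.Finite.of_finite
  let H : Submodule K F :=
    { carrier := {x | trF F p e m x = 0}
      add_mem' := fun {a b} ha hb => by
        simp only [Set.mem_setOf_eq] at *
        rw [trF_add, ha, hb, add_zero]
      zero_mem' := trF_zero p e m
      smul_mem' := fun k x hx => by
        have : trF F p e m ((k : F) * x) = (k : F) * trF F p e m x := trF_mul_K p e m k.2 x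
        show trF F p e m ((k : F) * x) = 0
        rw [this, hx, mul_zero] }
  have hmemH : ∀ x : F, x ∈ H ↔ trF F p e m x = 0 := fun x => Iff.rfl
  have hfinF : Module.finrank K F = m + 1 := by
    have h1 : Fintype.card F = Fintype.card K ^ Module.finrank K F := Module.card_eq_pow_finrank
    rw [hcard, hcardK, ← pow_mul] at h1
    have h2 := Nat.pow_right_injective hp2 h1
    exact (Nat.eq_of_mul_eq_mul_left (show 0 < e by omega) h2).symm
  have hfinH : Module.finrank K H = m := by
    haveI : Fintype H := Fintype.ofFinite _
    have h1 : Fintype.card H = Fintype.card K ^ Module.finrank K H := Module.card_eq_pow_finrank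
    have h2 : Fintype.card H = p ^ (e * m) := by
      rw [Fintype.card_of_subtype (Finset.univ.filter fun x : F => trF F p e m x = 0)
        (fun x => by simp only [Finset.mem_filter, Finset.mem_univ, true_and]; rfl)]
      exact card_trF_ker p e m he hm hcard
    rw [h2, hcardK, ← pow_mul] at h1
    have h3 := Nat.pow_right_injective hp2 h1
    exact (Nat.eq_of_mul_eq_mul_left (show 0 < e by omega) h3).symm
  set mulc := LinearMap.mulLeft K c with hmulc
  have hinj : Function.Injective mulc := by
    intro a b hab
    simp only [hmulc, LinearMap.mulLeft_apply] at hab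
    exact mul_left_cancel₀ hc0 hab
  have hsurj : Function.Surjective mulc := by
    intro y
    exact ⟨c⁻¹ * y, by simp only [hmulc, LinearMap.mulLeft_apply]; field_simp⟩
  set equivc : F ≃ₗ[K] F := LinearEquiv.ofBijective mulc ⟨hinj, hsurj⟩ with hequivc
  have hcoe : (equivc : F →ₗ[K] F) = mulc := rfl
  set H' := Submodule.comap mulc H with hH'
  have hfinH' : Module.finrank K H' = m := by
    have h1 : Submodule.map mulc H' = H := Submodule.map_comap_eq_of_surjective hsurj H
    have h2 : Module.finrank K (Submodule.map (equivc : F →ₗ[K] F) H') = Module.finrank K H' :=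
      LinearEquiv.finrank_map_eq equivc H'
    rw [hcoe, h1] at h2
    rw [← h2, hfinH]
  have hne : H' ≠ H := by
    intro h
    apply hcK
    apply stab_mem_sK p e m he hm hcard
    intro x hx
    have hxH : x ∈ H := hx
    rw [← h] at hxH
    exact hxH
  set J := H ⊓ H' with hJ
  have hJle : Module.finrank K ↥(H ⊔ H') + Module.finrank K ↥J = m + m := by
    rw [hJ, Submodule.finrank_sup_add_finrank_inf_eq, hfinH, hfinH']
  have hsup_le : Module.finrank K ↥(H ⊔ H') ≤ m + 1 :=
    le_trans (Submodule.finrank_le _) (le_of_eq hfinF)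
  have hJge : m - 1 ≤ Module.finrank K ↥J := by omega
  have hJltH : J < H := by
    rw [lt_iff_le_and_ne]
    refine ⟨inf_le_left, ?_⟩
    intro h
    have hle : H ≤ H' := by rw [← h]; exact inf_le_right
    exact hne (Submodule.eq_of_le_of_finrank_eq hle (by rw [hfinH, hfinH'])).symm
  have hJlt : Module.finrank K ↥J < m :=
    lt_of_lt_of_le (Submodule.finrank_lt_finrank_of_lt hJltH) (le_of_eq hfinH)
  have hfinJ : Module.finrank K ↥J = m - 1 := by omega
  haveI : Fintype J := Fintype.ofFinite _
  have hcardJ : Fintype.card J = p ^ (e * (m - 1)) := by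
    have h1 : Fintype.card J = Fintype.card K ^ Module.finrank K ↥J := Module.card_eq_pow_finrank
    rw [h1, hfinJ, hcardK, ← pow_mul]
  rw [← hcardJ]
  rw [Fintype.card_of_subtype (Finset.univ.filter fun x : F =>
      trF F p e m x = 0 ∧ trF F p e m (c * x) = 0)]
  intro x
  simp only [Finset.mem_filter, Finset.mem_univ, true_and]
  rw [hJ, Submodule.mem_inf, hH', Submodule.mem_comap]
  rfl

end Singer

set_option maxHeartbeats 1000000 in
/-- For the projective space `ℙ^m(𝔽_n)` with `n = p^e`, there exists an
`(ℓ, q, λ)`-difference set in `ZMod ℓ` which is fixed by the Frobenius automorphism,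
i.e. fixed setwise under multiplication by `p`. -/
theorem stmt_6 (p e n m ℓ q lam : ℕ) (hp : p.Prime) (he : 1 ≤ e) (hm : 2 ≤ m)
    (hn : n = p ^ e)
    (hℓ : ℓ = (n ^ (m + 1) - 1) / (n - 1))
    (hq : q = (n ^ m - 1) / (n - 1))
    (hlam : lam = (n ^ (m - 1) - 1) / (n - 1)) :
    ∃ D : Finset (ZMod ℓ),
      D.card = q ∧
      (∀ α : ZMod ℓ, α ≠ 0 →
        ((D ×ˢ D).filter (fun xy => xy.1 - xy.2 = α)).card = lam) ∧
      D.image (fun x => (p : ZMod ℓ) * x) = D := by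
  classical
  haveI : Fact p.Prime := ⟨hp⟩
  have hp2 : 2 ≤ p := hp.two_le
  have hm1 : 1 ≤ m := by omega
  set F := GaloisField p (e * (m + 1)) with hF
  haveI : Fintype F := Fintype.ofFinite F
  have hcard : Fintype.card F = p ^ (e * (m + 1)) := by
    rw [← Nat.card_eq_fintype_card]
    exact GaloisField.card p _ (by positivity)
  have hn2 : 2 ≤ n := by
    have h1 : p ^ 1 ≤ p ^ e := Nat.pow_le_pow_right (by omega) he
    have h2 : p ^ 1 = p := pow_one p
    omega
  -- arithmetic on ℓ, q, lam
  have hdiv : ∀ k : ℕ, (n ^ k - 1) / (n - 1) = ∑ i ∈ Finset.range k, n ^ i := by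
    intro k
    have h := geom_nat' n k (by omega)
    have h2 : n ^ k - 1 = (n - 1) * ∑ i ∈ Finset.range k, n ^ i := by
      set T := (n - 1) * ∑ i ∈ Finset.range k, n ^ i with hT
      omega
    rw [h2, Nat.mul_div_cancel_left _ (by omega)]
  have hlsum : ℓ = ∑ i ∈ Finset.range (m + 1), n ^ i := by rw [hℓ, hdiv]
  have hmul : ∀ k : ℕ, (∑ i ∈ Finset.range k, n ^ i) * (n - 1) = n ^ k - 1 := by
    intro k
    have h := geom_nat' n k (by omega)
    rw [mul_comm]
    set T := (n - 1) * ∑ i ∈ Finset.range k, n ^ i with hT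
    omega
  have hlN : ℓ * (n - 1) = n ^ (m + 1) - 1 := by rw [hlsum]; exact hmul _
  have hqN : q * (n - 1) = n ^ m - 1 := by rw [hq, hdiv]; exact hmul _
  have hlamN : lam * (n - 1) = n ^ (m - 1) - 1 := by rw [hlam, hdiv]; exact hmul _
  have hlpos : 0 < ℓ := by
    rw [hlsum]
    calc 0 < n ^ 0 := by rw [pow_zero]; omega
    _ ≤ ∑ i ∈ Finset.range (m + 1), n ^ i :=
      Finset.single_le_sum (f := fun i => n ^ i) (fun i _ => Nat.zero_le _)
        (Finset.mem_range.mpr (by omega))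
  haveI : NeZero ℓ := ⟨by omega⟩
  -- units
  have hcu : Fintype.card Fˣ = n ^ (m + 1) - 1 := by
    rw [Fintype.card_units, hcard, hn, ← pow_mul]
  set N := Fintype.card Fˣ with hN
  have hlN' : ℓ * (n - 1) = N := by omega
  have hldvdN : ℓ ∣ N := ⟨n - 1, hlN'.symm⟩
  obtain ⟨g, hg⟩ := IsCyclic.exists_generator (α := Fˣ)
  have hordg : orderOf g = N :=
    (orderOf_eq_card_of_forall_mem_zpowers hg).trans Nat.card_eq_fintype_card
  have hexists : ∀ u : Fˣ, ∃ k : ℕ, g ^ k = u := by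
    intro u
    obtain ⟨k, hk⟩ := (mem_powers_iff_mem_zpowers).mpr (hg u)
    exact ⟨k, hk⟩
  choose lg hlg using hexists
  set π : Fˣ → ZMod ℓ := fun u => ((lg u : ℕ) : ZMod ℓ) with hπ
  have hπg : ∀ a : ℕ, π (g ^ a) = (a : ZMod ℓ) := by
    intro a
    have h1 : g ^ lg (g ^ a) = g ^ a := hlg _
    have h2 : lg (g ^ a) ≡ a [MOD N] := by rwa [pow_eq_pow_iff_modEq, hordg] at h1
    exact (ZMod.natCast_eq_natCast_iff _ _ _).mpr (h2.of_dvd hldvdN)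
  have hπmul : ∀ u v : Fˣ, π (u * v) = π u + π v := by
    intro u v
    have h1 : u * v = g ^ (lg u + lg v) := by rw [pow_add, hlg, hlg]
    rw [h1, hπg]
    push_cast
    rfl
  have hπzero : ∀ u : Fˣ, π u = 0 ↔ u ^ (n - 1) = 1 := by
    intro u
    constructor
    · intro h
      obtain ⟨t, ht⟩ : ℓ ∣ lg u := by
        rwa [hπ, ZMod.natCast_eq_zero_iff] at h
      have h2 : u ^ (n - 1) = g ^ (ℓ * t * (n - 1)) := by rw [← hlg u, ← pow_mul, ht]
      have h3 : ℓ * t * (n - 1) = N * t := by rw [← hlN']; ring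
      rw [h2, h3, pow_mul, ← hordg, pow_orderOf_eq_one, one_pow]
    · intro h
      have h1 : g ^ (lg u * (n - 1)) = g ^ 0 := by rw [pow_mul, hlg, h, pow_zero]
      have h2 : lg u * (n - 1) ≡ 0 [MOD N] := by rwa [pow_eq_pow_iff_modEq, hordg] at h1
      have h3 : ℓ * (n - 1) ∣ lg u * (n - 1) := by rw [hlN']; exact (Nat.modEq_zero_iff_dvd).mp h2
      have h4 : ℓ ∣ lg u := (Nat.mul_dvd_mul_iff_right (show 0 < n - 1 by omega)).mp h3
      rw [hπ]
      exact (ZMod.natCast_eq_zero_iff _ _).mpr h4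
  have hπsurj : ∀ x : ZMod ℓ, ∃ u : Fˣ, π u = x := by
    intro x
    exact ⟨g ^ x.val, by rw [hπg]; exact ZMod.natCast_rightInverse x⟩
  have hπp : ∀ u : Fˣ, π (u ^ p) = (p : ZMod ℓ) * π u := by
    intro u
    have h1 : u ^ p = g ^ (lg u * p) := by rw [pow_mul, hlg]
    rw [h1, hπg]
    push_cast
    ring
  -- the w-count
  set W := Finset.univ.filter (fun w : Fˣ => w ^ (n - 1) = 1) with hW
  have hWcard : W.card = n - 1 := by
    rw [hW]
    refine card_pow_units Fˣ (n - 1) ?_ (by omega)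
    exact Dvd.intro_left ℓ hlN'
  -- fiber counting
  have hfiber : ∀ U : Finset Fˣ, (∀ u ∈ U, ∀ w : Fˣ, w ^ (n - 1) = 1 → u * w ∈ U) →
      (U.image π).card * (n - 1) = U.card := by
    intro U hU
    have h1 : U.card = ∑ d ∈ U.image π, (U.filter fun u => π u = d).card :=
      Finset.card_eq_sum_card_fiberwise (fun x hx => Finset.mem_image_of_mem _ hx)
    have h2 : ∀ d ∈ U.image π, (U.filter fun u => π u = d).card = n - 1 := by
      intro d hd
      obtain ⟨u, hu, hud⟩ := Finset.mem_image.mp hd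
      rw [← hWcard]
      refine (Finset.card_bij (fun w _ => u * w) ?_ ?_ ?_).symm
      · intro w hw
        simp only [hW, Finset.mem_filter, Finset.mem_univ, true_and] at hw
        rw [Finset.mem_filter]
        exact ⟨hU u hu w hw, by rw [hπmul, (hπzero w).mpr hw, add_zero, hud]⟩
      · intro a _ b _ h
        exact mul_left_cancel h
      · intro v hv
        rw [Finset.mem_filter] at hv
        refine ⟨u⁻¹ * v, ?_, by show u * (u⁻¹ * v) = v; exact mul_inv_cancel_left u v⟩
        simp only [hW, Finset.mem_filter, Finset.mem_univ, true_and]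
        rw [← hπzero]
        have h3 : π u + π (u⁻¹ * v) = π u := by
          rw [← hπmul, mul_inv_cancel_left, hv.2, hud]
        have h4 : π u + π (u⁻¹ * v) = π u + 0 := by rw [add_zero]; exact h3
        exact add_left_cancel h4
    rw [Finset.sum_congr rfl h2, Finset.sum_const, smul_eq_mul] at h1
    omega
  -- the point set
  set UH := Finset.univ.filter (fun u : Fˣ => trF F p e m (u : F) = 0) with hUH
  have hwK : ∀ w : Fˣ, w ^ (n - 1) = 1 → (w : F) ∈ sK F p e := by
    intro w hw
    rw [mem_sK]
    exact (units_pow_sub_one_iff p e he w).mp (by rwa [hn] at hw)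
  have hUHclosed : ∀ u ∈ UH, ∀ w : Fˣ, w ^ (n - 1) = 1 → u * w ∈ UH := by
    intro u hu w hw
    simp only [hUH, Finset.mem_filter, Finset.mem_univ, true_and] at hu ⊢
    rw [Units.val_mul, mul_comm (u : F) (w : F), trF_mul_K p e m (hwK w hw), hu, mul_zero]
  have hS0card := card_trF_ker p e m he hm1 hcard
  have hUHcard : UH.card = n ^ m - 1 := by
    have h0 : (0 : F) ∈ Finset.univ.filter (fun x : F => trF F p e m x = 0) := by
      simp only [Finset.mem_filter, Finset.mem_univ, true_and]
      exact trF_zero p e m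
    have hbij : UH.card = ((Finset.univ.filter (fun x : F => trF F p e m x = 0)).erase 0).card := by
      refine Finset.card_bij (fun (u : Fˣ) (_ : u ∈ UH) => (u : F)) ?_ ?_ ?_
      · intro u hu
        simp only [hUH, Finset.mem_filter, Finset.mem_univ, true_and] at hu
        rw [Finset.mem_erase]
        exact ⟨Units.ne_zero u, by simp only [Finset.mem_filter, Finset.mem_univ, true_and]; exact hu⟩
      · intro a _ b _ h
        exact Units.ext h
      · intro x hx
        rw [Finset.mem_erase, Finset.mem_filter] at hx
        refine ⟨Units.mk0 x hx.1, ?_, rfl⟩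
        simp only [hUH, Finset.mem_filter, Finset.mem_univ, true_and]
        exact hx.2.2
    rw [hbij, Finset.card_erase_of_mem h0, hS0card, hn, ← pow_mul]
  set D := UH.image π with hD
  have hDcard : D.card = q := by
    have h1 : D.card * (n - 1) = n ^ m - 1 := by rw [hD, hfiber UH hUHclosed, hUHcard]
    have h2 : q * (n - 1) = n ^ m - 1 := hqN
    have h3 : 0 < n - 1 := by omega
    exact Nat.eq_of_mul_eq_mul_right h3 (h1.trans h2.symm)
  refine ⟨D, hDcard, ?_, ?_⟩
  · -- difference set property
    intro α hα
    obtain ⟨c, hc⟩ := hπsurj α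
    have hcne : ¬ c ^ (n - 1) = 1 := by
      intro h
      exact hα (by rw [← hc]; exact (hπzero c).mpr h)
    have hcK : (c : F) ∉ sK F p e := by
      intro h
      apply hcne
      rw [mem_sK] at h
      rw [hn]
      exact (units_pow_sub_one_iff p e he c).mpr h
    have hinter := card_inter p e m he hm1 hcard (c : F) (Units.ne_zero c) hcK
    set U' := Finset.univ.filter (fun v : Fˣ =>
      trF F p e m (v : F) = 0 ∧ trF F p e m ((c : F) * (v : F)) = 0) with hU'
    have hU'closed : ∀ v ∈ U', ∀ w : Fˣ, w ^ (n - 1) = 1 → v * w ∈ U' := by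
      intro v hv w hw
      simp only [hU', Finset.mem_filter, Finset.mem_univ, true_and] at hv ⊢
      constructor
      · rw [Units.val_mul, mul_comm (v : F) (w : F), trF_mul_K p e m (hwK w hw), hv.1, mul_zero]
      · rw [Units.val_mul, show (c : F) * ((v : F) * (w : F)) = (w : F) * ((c : F) * (v : F)) by ring,
          trF_mul_K p e m (hwK w hw), hv.2, mul_zero]
    have hU'card : U'.card = n ^ (m - 1) - 1 := by
      have h0 : (0 : F) ∈ Finset.univ.filter (fun x : F =>
          trF F p e m x = 0 ∧ trF F p e m ((c : F) * x) = 0) := by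
        simp only [Finset.mem_filter, Finset.mem_univ, true_and, mul_zero]
        exact ⟨trF_zero p e m, trF_zero p e m⟩
      have hbij : U'.card = ((Finset.univ.filter (fun x : F =>
          trF F p e m x = 0 ∧ trF F p e m ((c : F) * x) = 0)).erase 0).card := by
        refine Finset.card_bij (fun (u : Fˣ) (_ : u ∈ U') => (u : F)) ?_ ?_ ?_
        · intro u hu
          simp only [hU', Finset.mem_filter, Finset.mem_univ, true_and] at hu
          rw [Finset.mem_erase]
          exact ⟨Units.ne_zero u, by simp only [Finset.mem_filter, Finset.mem_univ, true_and]; exact hu⟩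
        · intro a _ b _ h
          exact Units.ext h
        · intro x hx
          rw [Finset.mem_erase, Finset.mem_filter] at hx
          refine ⟨Units.mk0 x hx.1, ?_, rfl⟩
          simp only [hU', Finset.mem_filter, Finset.mem_univ, true_and]
          exact hx.2.2
      rw [hbij, Finset.card_erase_of_mem h0, hinter, hn, ← pow_mul]
    set D' := U'.image π with hD'
    have hD'card : D'.card = lam := by
      have h1 : D'.card * (n - 1) = n ^ (m - 1) - 1 := by
        rw [hD', hfiber U' hU'closed, hU'card]
      exact Nat.eq_of_mul_eq_mul_right (show 0 < n - 1 by omega) (h1.trans hlamN.symm)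
    rw [← hD'card]
    refine (Finset.card_bij (fun y _ => (y + α, y)) ?_ ?_ ?_).symm
    · -- maps into the filter
      intro y hy
      obtain ⟨v, hv, hvy⟩ := Finset.mem_image.mp hy
      simp only [hU', Finset.mem_filter, Finset.mem_univ, true_and] at hv
      have hyaD : y + α ∈ D := by
        have hcv : c * v ∈ UH := by
          simp only [hUH, Finset.mem_filter, Finset.mem_univ, true_and]
          rw [Units.val_mul]
          exact hv.2
        have hπcv : π (c * v) = y + α := by rw [hπmul, hc, ← hvy]; ring
        have h6 : y + α ∈ UH.image π := hπcv ▸ Finset.mem_image_of_mem π hcv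
        rw [hD]
        exact h6
      have hyD : y ∈ D := by
        have hvUH : v ∈ UH := by
          simp only [hUH, Finset.mem_filter, Finset.mem_univ, true_and]
          exact hv.1
        have h6 : y ∈ UH.image π := hvy ▸ Finset.mem_image_of_mem π hvUH
        rw [hD]
        exact h6
      show (y + α, y) ∈ Finset.filter (fun xy => xy.1 - xy.2 = α) (D ×ˢ D)
      rw [Finset.mem_filter, Finset.mem_product]
      exact ⟨⟨hyaD, hyD⟩, by simp⟩
    · intro a _ b _ h
      exact congrArg Prod.snd h
    · -- surjective
      rintro ⟨x, y⟩ hxy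
      rw [Finset.mem_filter, Finset.mem_product] at hxy
      obtain ⟨⟨hx, hy⟩, hdiff⟩ := hxy
      obtain ⟨v, hv, hvy0⟩ := Finset.mem_image.mp hy
      obtain ⟨u, hu, hux0⟩ := Finset.mem_image.mp hx
      simp only [hUH, Finset.mem_filter, Finset.mem_univ, true_and] at hv hu
      have hvy : π v = y := hvy0
      have hux : π u = x := hux0
      have hxay : x = α + y := by
        have h9 : x - y = α := hdiff
        rw [← h9]; ring
      have hπcv : π (c * v) = π u := by
        rw [hπmul, hc, hvy, hux, ← hxay]
      set w := u⁻¹ * (c * v) with hw'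
      have huw : u * w = c * v := by rw [hw', mul_inv_cancel_left]
      have hπw : π w = 0 := by
        have h3 : π u + π w = π u := by rw [← hπmul, huw, hπcv]
        exact add_left_cancel (a := π u) (by rw [h3, add_zero])
      have hwW : w ^ (n - 1) = 1 := (hπzero w).mp hπw
      have hcvH : trF F p e m ((c : F) * (v : F)) = 0 := by
        have h4 : (c : F) * (v : F) = (w : F) * (u : F) := by
          rw [← Units.val_mul, ← huw, Units.val_mul]; ring
        rw [h4, trF_mul_K p e m (hwK w hwW), hu, mul_zero]
      have hvU' : v ∈ U' := by
        simp only [hU', Finset.mem_filter, Finset.mem_univ, true_and]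
        exact ⟨hv, hcvH⟩
      refine ⟨y, ?_, ?_⟩
      · have h6 : y ∈ U'.image π := hvy ▸ Finset.mem_image_of_mem π hvU'
        rw [hD']
        exact h6
      · show (y + α, y) = (x, y)
        rw [hxay, add_comm]
  · -- Frobenius fixedness
    have hsub : D.image (fun x => (p : ZMod ℓ) * x) ⊆ D := by
      intro x hx
      obtain ⟨y, hy, hxy⟩ := Finset.mem_image.mp hx
      obtain ⟨u, hu, huy⟩ := Finset.mem_image.mp hy
      simp only [hUH, Finset.mem_filter, Finset.mem_univ, true_and] at hu
      have hup : u ^ p ∈ UH := by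
        simp only [hUH, Finset.mem_filter, Finset.mem_univ, true_and]
        rw [Units.val_pow_eq_pow_val, trF_pow_p, hu, zero_pow hp.ne_zero]
      have : π (u ^ p) = x := by rw [hπp, huy, hxy]
      rw [hD]
      exact this ▸ Finset.mem_image_of_mem π hup
    have hcop : Nat.Coprime p ℓ := by
      have hdvd1 : p ∣ ℓ - 1 := by
        have h1 : ℓ = (∑ i ∈ Finset.range m, n ^ (i + 1)) + 1 := by
          rw [hlsum, Finset.sum_range_succ', pow_zero]
        have h2 : p ∣ ∑ i ∈ Finset.range m, n ^ (i + 1) := by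
          apply Finset.dvd_sum
          intro i _
          rw [hn, ← pow_mul]
          exact dvd_pow_self p (Nat.mul_ne_zero (by omega) (by omega))
        have h3 : ℓ - 1 = ∑ i ∈ Finset.range m, n ^ (i + 1) := by omega
        rwa [h3]
      rw [Nat.Prime.coprime_iff_not_dvd hp]
      intro hdvd2
      have h5 : p ∣ ℓ - (ℓ - 1) := Nat.dvd_sub hdvd2 hdvd1
      rw [show ℓ - (ℓ - 1) = 1 by omega] at h5
      have := Nat.le_of_dvd one_pos h5
      omega
    have hunit : IsUnit (p : ZMod ℓ) := (ZMod.isUnit_iff_coprime p ℓ).mpr hcop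
    have hinj : Function.Injective (fun x : ZMod ℓ => (p : ZMod ℓ) * x) :=
      fun a b hab => hunit.mul_left_cancel hab
    apply Finset.eq_of_subset_of_card_le hsub
    rw [Finset.card_image_of_injective D hinj]
end

section
/- Let ℓ ≥ 1, let p be an integer, and let D be a finset of ZMod ℓ which is an (ℓ, k, λ)-difference set with λ < k, fixed under multiplication by p (the image of D under x ↦ p·x equals D). Then for s ∈ ZMod ℓ, the shift D + s (image of D under x ↦ x + s) is fixed under multiplication by p if and only if (p − 1)·s = 0 in ZMod ℓ. Consequently, the number of s ∈ ZMod ℓ for which D + s is fixed under multiplication by p equals gcd(p − 1, ℓ). -/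
/-!
Multiplication by `p` carries `D + s` to `p D + p s = D + p s`, so `D + s` is fixed iff
`D + p s = D + s`. A nontrivial difference set has trivial stabilizer under translation: if
`D + t = D` with `t ≠ 0`, every `y ∈ D` gives a pair `(y + t, y)` with difference `t`, so
`k ≤ λ`. Hence the condition is `p s = s`, and in the cyclic group `ZMod ℓ` the kernel of
multiplication by `p - 1` has `gcd(p - 1, ℓ)` elements.
-/

section Translates

variable {G : Type*} [AddCommGroup G] [DecidableEq G]

theorem card_le_card_filter_sub_eq_of_image_add_eq {D : Finset G} {t : G}
    (hD : D.image (· + t) = D) :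
    D.card ≤ ((D ×ˢ D).filter (fun xy => xy.1 - xy.2 = t)).card := by
  refine Finset.card_le_card_of_injOn (fun y => (y + t, y)) (fun y hy => ?_)
    (fun a _ b _ h => (Prod.mk.inj h).2)
  have hyt : y + t ∈ D := hD ▸ Finset.mem_image_of_mem _ hy
  simpa [hyt] using hy

theorem image_add_right_inj_of_card_filter_sub_lt {D : Finset G}
    (hD : ∀ t ≠ 0, ((D ×ˢ D).filter (fun xy => xy.1 - xy.2 = t)).card < D.card) {a b : G} :
    D.image (· + a) = D.image (· + b) ↔ a = b := by
  refine ⟨fun h => ?_, fun h => h ▸ rfl⟩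
  by_contra hab
  have hfixed : D.image (· + (a - b)) = D := by
    have := congrArg (Finset.image (· - b)) h
    simpa only [Finset.image_image, Function.comp_def, add_sub_cancel_right, add_sub_assoc,
      Finset.image_id'] using this
  exact (card_le_card_filter_sub_eq_of_image_add_eq hfixed).not_gt
    (hD _ (sub_ne_zero.mpr hab))

end Translates

theorem image_mul_left_image_add_right {R : Type*} [Semiring R] [DecidableEq R]
    (D : Finset R) (c s : R) :
    (D.image (· + s)).image (c * ·) = (D.image (c * ·)).image (· + c * s) := by
  simp only [Finset.image_image, Function.comp_def, mul_add]

theorem ZMod.card_intCast_mul_eq_zero (n : ℕ) [NeZero n] (m : ℤ) :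
    Nat.card {s : ZMod n // (m : ZMod n) * s = 0} = Int.gcd m n := by
  have hker : ∀ s : ZMod n,
      (m : ZMod n) * s = 0 ↔ s ∈ (nsmulAddMonoidHom m.natAbs : ZMod n →+ ZMod n).ker := by
    intro s
    rw [AddMonoidHom.mem_ker, nsmulAddMonoidHom_apply, nsmul_eq_mul]
    obtain ⟨d, rfl | rfl⟩ := Int.eq_nat_or_neg m <;> simp
  rw [Nat.card_congr (Equiv.subtypeEquivRight hker), IsAddCyclic.card_nsmulAddMonoidHom_ker,
    Nat.card_zmod, Int.gcd, Int.natAbs_natCast, Nat.gcd_comm]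

/-- For a nontrivial `(ℓ, k, λ)`-difference set `D` in `ZMod ℓ` fixed under multiplication
by `p`, a shift `D + s` is fixed under multiplication by `p` iff `(p - 1)·s = 0`; hence the
number of such shifts is `gcd(p - 1, ℓ)`. -/
theorem stmt_10 (ℓ k lam : ℕ) (hℓ : 1 ≤ ℓ) (p : ℤ) (D : Finset (ZMod ℓ))
    (hcard : D.card = k) (hlam : lam < k)
    (hdiff : ∀ α : ZMod ℓ, α ≠ 0 →
      ((D ×ˢ D).filter (fun xy => xy.1 - xy.2 = α)).card = lam)
    (hfrob : D.image (fun x => (p : ZMod ℓ) * x) = D) :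
    (∀ s : ZMod ℓ,
      (D.image (fun x => x + s)).image (fun x => (p : ZMod ℓ) * x) =
          D.image (fun x => x + s) ↔
        ((p : ZMod ℓ) - 1) * s = 0) ∧
    Nat.card {s : ZMod ℓ //
        (D.image (fun x => x + s)).image (fun x => (p : ZMod ℓ) * x) =
          D.image (fun x => x + s)} = Int.gcd (p - 1) ℓ := by
  have : NeZero ℓ := ⟨by omega⟩
  have hshift (a b : ZMod ℓ) : D.image (· + a) = D.image (· + b) ↔ a = b :=
    image_add_right_inj_of_card_filter_sub_lt fun t ht => by rw [hdiff t ht, hcard]; exact hlam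
  have hfixed (s : ZMod ℓ) :
      (D.image (· + s)).image ((p : ZMod ℓ) * ·) = D.image (· + s) ↔
        ((p : ZMod ℓ) - 1) * s = 0 := by
    rw [image_mul_left_image_add_right, hfrob, hshift, sub_one_mul, sub_eq_zero]
  refine ⟨hfixed, ?_⟩
  rw [← ZMod.card_intCast_mul_eq_zero, Int.cast_sub, Int.cast_one]
  exact Nat.card_congr (Equiv.subtypeEquivRight hfixed)
end

section
/- Let p be a prime, e ≥ 1, m ≥ 1, n = p^e, ℓ = (n^(m+1) − 1)/(n − 1), and f = e·(m+1). Let k ≥ 1, let j be a natural number, and let d : Fin k → ZMod ℓ. Define the cyclic sequence c of length f·k by c(h·k + i) = p^(h·j) · d(i) for h ∈ Fin f and i ∈ Fin k (indices taken cyclically modulo f·k). Then every difference of cyclically consecutive terms of c is a unit in ZMod ℓ if and only if (i) for every i with i + 1 < k, the difference d(i) − d(i+1) is a unit in ZMod ℓ, and (ii) d(k−1) − p^j · d(0) is a unit in ZMod ℓ. -/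
/-!
Write `S t = q ^ (⌊t/k⌋·j) · d (t mod k)` for the Frobenius compatible sequence, read on all of `ℕ`.
Shifting by one block multiplies `S` by `q ^ j`, so every consecutive difference
`S t - S (t+1)` is a power of `q` times one of the `k` differences `S i - S (i+1)` with `i < k`,
which are the differences of the first block together with `d(k-1) - q^j d(0)`.
Since `ℓ ∣ n^(m+1) - 1`, the element `q = p` satisfies `q ^ f = 1` in `ZMod ℓ`; hence it is a
unit and `S` has period `f·k`, so that the cyclic sequence of length `f·k` is exactly `S`.
-/

theorem ZMod.natCast_pow_eq_one_of_dvd_sub_one {ℓ n r : ℕ} (hn : 0 < n) (h : ℓ ∣ n ^ r - 1) :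
    (n : ZMod ℓ) ^ r = 1 := by
  have hmod : 1 ≡ n ^ r [MOD ℓ] := (Nat.modEq_iff_dvd' (Nat.one_le_pow _ _ hn)).mpr h
  exact_mod_cast ((ZMod.natCast_eq_natCast_iff _ _ _).mpr hmod).symm

section FrobeniusSeq

variable {R : Type*} [CommRing R] {k : ℕ} [NeZero k] (q : R) (j : ℕ) (d : Fin k → R)

def frobeniusSeq (t : ℕ) : R := q ^ (t / k * j) * d (Fin.ofNat k t)

theorem frobeniusSeq_mul_add (h s : ℕ) :
    frobeniusSeq q j d (k * h + s) = q ^ (h * j) * frobeniusSeq q j d s := by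
  have hk : 0 < k := Nat.pos_of_neZero k
  have hidx : Fin.ofNat k (k * h + s) = Fin.ofNat k s := Fin.ext (Nat.mul_add_mod k h s)
  rw [frobeniusSeq, frobeniusSeq, Nat.mul_add_div hk, hidx, add_mul, pow_add, mul_assoc]

theorem frobeniusSeq_of_lt {i : ℕ} (hi : i < k) : frobeniusSeq q j d i = d ⟨i, hi⟩ := by
  simp [frobeniusSeq, Nat.div_eq_of_lt hi, Fin.ofNat, Nat.mod_eq_of_lt hi]

theorem frobeniusSeq_self : frobeniusSeq q j d k = q ^ j * d ⟨0, Nat.pos_of_neZero k⟩ := by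
  simpa [frobeniusSeq_of_lt q j d (Nat.pos_of_neZero k)] using frobeniusSeq_mul_add q j d 1 0

variable {q j d}

theorem frobeniusSeq_mod {f : ℕ} (hq : q ^ f = 1) (t : ℕ) :
    frobeniusSeq q j d (t % (f * k)) = frobeniusSeq q j d t := by
  conv_rhs => rw [← Nat.mod_add_div t (f * k)]
  rw [add_comm, mul_comm f k, mul_assoc k, frobeniusSeq_mul_add, mul_assoc f, pow_mul, hq, one_pow,
    one_mul]

theorem isUnit_frobeniusSeq_sub_succ_iff (hq : IsUnit q) (t : ℕ) :
    IsUnit (frobeniusSeq q j d t - frobeniusSeq q j d (t + 1)) ↔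
      IsUnit (frobeniusSeq q j d (t % k) - frobeniusSeq q j d (t % k + 1)) := by
  have hshift : frobeniusSeq q j d t - frobeniusSeq q j d (t + 1) =
      q ^ (t / k * j) * (frobeniusSeq q j d (t % k) - frobeniusSeq q j d (t % k + 1)) := by
    conv_lhs => rw [← Nat.div_add_mod t k, add_assoc, frobeniusSeq_mul_add, frobeniusSeq_mul_add]
    ring
  rw [hshift, IsUnit.mul_iff, and_iff_right (hq.pow _)]

theorem forall_isUnit_frobeniusSeq_sub_iff {f : ℕ} (hq : q ^ f = 1) (hf : 0 < f) :
    (∀ t < f * k, IsUnit (frobeniusSeq q j d t - frobeniusSeq q j d ((t + 1) % (f * k)))) ↔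
      ∀ i < k, IsUnit (frobeniusSeq q j d i - frobeniusSeq q j d (i + 1)) := by
  have hunit : IsUnit q := IsUnit.of_pow_eq_one hq hf.ne'
  simp only [frobeniusSeq_mod hq]
  constructor
  · exact fun H i hi => H i (lt_of_lt_of_le hi (Nat.le_mul_of_pos_left k hf))
  · intro H t _
    exact (isUnit_frobeniusSeq_sub_succ_iff hunit t).mpr (H _ (Nat.mod_lt t (Nat.pos_of_neZero k)))

theorem forall_lt_isUnit_frobeniusSeq_sub_iff :
    (∀ i < k, IsUnit (frobeniusSeq q j d i - frobeniusSeq q j d (i + 1))) ↔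
      (∀ (i : Fin k) (h : i.1 + 1 < k), IsUnit (d i - d ⟨i.1 + 1, h⟩)) ∧
        IsUnit (d ⟨k - 1, by have := Nat.pos_of_neZero k; omega⟩ -
          q ^ j * d ⟨0, Nat.pos_of_neZero k⟩) := by
  have hk : 0 < k := Nat.pos_of_neZero k
  have hlast : frobeniusSeq q j d (k - 1) - frobeniusSeq q j d (k - 1 + 1) =
      d ⟨k - 1, by omega⟩ - q ^ j * d ⟨0, hk⟩ := by
    rw [frobeniusSeq_of_lt q j d (by omega), Nat.sub_add_cancel hk, frobeniusSeq_self]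
  constructor
  · intro H
    refine ⟨fun i hi => ?_, hlast ▸ H (k - 1) (by omega)⟩
    simpa [frobeniusSeq_of_lt q j d hi, frobeniusSeq_of_lt q j d i.2] using H i i.2
  · rintro ⟨Hblock, Hlast⟩ i hi
    rcases Nat.lt_or_ge (i + 1) k with hlt | hge
    · simpa [frobeniusSeq_of_lt q j d hlt, frobeniusSeq_of_lt q j d hi] using Hblock ⟨i, hi⟩ hlt
    · obtain rfl : i = k - 1 := by omega
      exact hlast ▸ Hlast

end FrobeniusSeq

/-- Wada compatibility of a Frobenius compatible cyclic ordering: the cyclic sequence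
`c(h·k + i) = p^(h·j) · d(i)` (of length `f·k`) has all cyclically consecutive differences
units in `ZMod ℓ` iff the differences of consecutive elements of the first block
`d(0), …, d(k-1)` and the transition difference `d(k-1) - p^j · d(0)` are units. -/
theorem stmt_11 (p e m n ℓ f : ℕ) (hp : p.Prime) (he : 1 ≤ e)
    (hn : n = p ^ e) (hℓ : ℓ = (n ^ (m + 1) - 1) / (n - 1)) (hf : f = e * (m + 1))
    (k : ℕ) (hk : 1 ≤ k) (j : ℕ) (d : Fin k → ZMod ℓ)
    (c : Fin (f * k) → ZMod ℓ)
    (hc : ∀ t : Fin (f * k),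
      c t = (p : ZMod ℓ) ^ ((t.1 / k) * j) * d ⟨t.1 % k, Nat.mod_lt _ hk⟩) :
    (∀ t : Fin (f * k), IsUnit (c t - c ⟨(t.1 + 1) % (f * k), Nat.mod_lt _ t.pos⟩)) ↔
      ((∀ (i : Fin k) (h : i.1 + 1 < k), IsUnit (d i - d ⟨i.1 + 1, h⟩)) ∧
        IsUnit (d ⟨k - 1, by omega⟩ - (p : ZMod ℓ) ^ j * d ⟨0, hk⟩)) := by
  have : NeZero k := ⟨by omega⟩
  have hℓ_dvd : ℓ ∣ n ^ (m + 1) - 1 :=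
    hℓ ▸ Nat.div_dvd_of_dvd (by simpa using Nat.sub_dvd_pow_sub_pow n 1 (m + 1))
  have hq : (p : ZMod ℓ) ^ f = 1 := by
    have := ZMod.natCast_pow_eq_one_of_dvd_sub_one (hn ▸ pow_pos hp.pos e) hℓ_dvd
    rwa [hf, pow_mul, ← Nat.cast_pow, ← hn]
  have hc' : ∀ t, c t = frobeniusSeq (p : ZMod ℓ) j d t := hc
  simp only [hc']
  rw [Fin.forall_iff, forall_isUnit_frobeniusSeq_sub_iff hq (hf ▸ Nat.mul_pos he m.succ_pos),
    forall_lt_isUnit_frobeniusSeq_sub_iff]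
end

section
/- Let p and m + 1 be primes with m ≥ 1, p ≠ m + 1 and p ≢ 1 (mod m + 1), and set ℓ = (p^(m+1) − 1)/(p − 1). Then for every d ∈ ZMod ℓ, if p·d = d then d = 0; i.e., the only fixed point of multiplication by p on ZMod ℓ is 0. -/
/-- If `p` and `m + 1` are primes with `p ≠ m + 1` and `p ≢ 1 (mod m + 1)`, then the only
fixed point of multiplication by `p` on `ZMod ℓ`, `ℓ = (p^(m+1) - 1)/(p - 1)`, is `0`. -/
theorem stmt_15 (p m ℓ : ℕ) (hp : p.Prime) (hm1 : (m + 1).Prime) (hm : 1 ≤ m)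
    (hne : p ≠ m + 1) (hmod : ¬ p ≡ 1 [MOD m + 1])
    (hℓ : ℓ = (p ^ (m + 1) - 1) / (p - 1)) :
    ∀ d : ZMod ℓ, (p : ZMod ℓ) * d = d → d = 0 := by
  have hp2 : 2 ≤ p := hp.two_le
  have hsum : ℓ = ∑ k ∈ Finset.range (m + 1), p ^ k := by
    rw [hℓ, Nat.geomSum_eq hp2]
  -- p ≡ 1 [MOD p - 1]
  have hp1 : p ≡ 1 [MOD p - 1] := ((Nat.modEq_iff_dvd' hp.one_le).mpr dvd_rfl).symm
  -- geometric sum mod p - 1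
  have hgeo : ∀ n : ℕ, (∑ k ∈ Finset.range n, p ^ k) ≡ n [MOD p - 1] := by
    intro n
    induction n with
    | zero => rfl
    | succ n ih =>
      rw [Finset.sum_range_succ]
      exact ih.add (by simpa using hp1.pow n)
  have hmod' : ℓ ≡ m + 1 [MOD p - 1] := hsum ▸ hgeo (m + 1)
  have hle : m + 1 ≤ ℓ := by
    rw [hsum]
    calc m + 1 = ∑ k ∈ Finset.range (m + 1), 1 := by simp
    _ ≤ ∑ k ∈ Finset.range (m + 1), p ^ k := by
        exact Finset.sum_le_sum fun k _ => Nat.one_le_pow _ _ (by omega)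
  have hdvd : p - 1 ∣ ℓ - (m + 1) := (Nat.modEq_iff_dvd' hle).mp hmod'.symm
  -- gcd (p-1) ℓ divides m + 1
  have hcop : Nat.Coprime (p - 1) ℓ := by
    set g := Nat.gcd (p - 1) ℓ with hg
    have hg1 : g ∣ p - 1 := Nat.gcd_dvd_left _ _
    have hg2 : g ∣ ℓ := Nat.gcd_dvd_right _ _
    have hg3 : g ∣ m + 1 := (Nat.dvd_sub hg2 (hg1.trans hdvd)).trans (by
      have : ℓ - (ℓ - (m + 1)) = m + 1 := by omega
      rw [this])
    rcases (Nat.dvd_prime hm1).mp hg3 with h1 | h1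
    · exact h1
    · exfalso
      apply hmod
      have : m + 1 ∣ p - 1 := h1 ▸ hg1
      exact ((Nat.modEq_iff_dvd' hp.one_le).mpr this).symm
  haveI : NeZero ℓ := ⟨by omega⟩
  have hu : IsUnit ((p - 1 : ℕ) : ZMod ℓ) := (ZMod.isUnit_iff_coprime _ _).mpr hcop
  intro d hd
  have h0 : ((p - 1 : ℕ) : ZMod ℓ) * d = 0 := by
    push_cast [Nat.cast_sub hp.one_le]
    rw [sub_mul, one_mul, hd, sub_self]
  exact (hu.mul_right_eq_zero).mp h0
end

section
/- Let p and m + 1 be primes with m ≥ 1, p ≠ m + 1 and p ≢ 1 (mod m + 1), and set ℓ = (p^(m+1) − 1)/(p − 1). Then for every nonzero d ∈ ZMod ℓ, the orbit {p^k · d : k ∈ ℕ} of d under repeated multiplication by p has cardinality exactly m + 1. -/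
/-!
Since `ℓ = 1 + p + ⋯ + p^m`, we have `p^(m+1) = 1` in `ZMod ℓ`, so every point is periodic
under `x ↦ p x` with period dividing the prime `m + 1`. A nonzero `d` is not fixed: `ℓ ≡ m + 1`
modulo `p - 1` and `m + 1 ∤ p - 1`, so `p - 1` is a unit mod `ℓ`.
-/

open Finset Function

theorem Function.ncard_range_iterate_eq_minimalPeriod {α : Type*} {f : α → α} {x : α}
    (hx : x ∈ periodicPts f) :
    (Set.range (f^[·] x)).ncard = minimalPeriod f x := by
  have hrange : Set.range (f^[·] x) = (fun n => f^[n] x) '' Set.Iio (minimalPeriod f x) := by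
    refine (Set.image_subset_range _ _).antisymm' ?_
    rintro _ ⟨n, rfl⟩
    exact ⟨n % minimalPeriod f x, Nat.mod_lt _ (minimalPeriod_pos_of_mem_periodicPts hx),
      iterate_mod_minimalPeriod_eq⟩
  rw [hrange, iterate_injOn_Iio_minimalPeriod.ncard_image, ← coe_range, Set.ncard_coe_finset,
    card_range]

theorem Nat.coprime_sub_one_geomSum {p q : ℕ} (hp : 1 ≤ p) (hq : q.Prime) (h : ¬ p ≡ 1 [MOD q]) :
    Coprime (p - 1) (∑ i ∈ range q, p ^ i) := by
  have hsum : ∑ i ∈ range q, p ^ i ≡ q [MOD p - 1] := by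
    have hp1 : p ≡ 1 [MOD p - 1] := Nat.modEq_sub hp
    simpa using Nat.ModEq.sum (s := range q) fun i _ => hp1.pow i
  have hq : Coprime q (p - 1) :=
    (Nat.Prime.coprime_iff_not_dvd hq).2 fun hdvd => h ((Nat.modEq_iff_dvd' hp).2 hdvd).symm
  rw [Nat.Coprime, Nat.gcd_comm, hsum.gcd_eq]
  exact hq

theorem ZMod.natCast_pow_eq_one_of_eq_geomSum {p n ℓ : ℕ} (hℓ : ℓ = ∑ i ∈ range n, p ^ i) :
    (p : ZMod ℓ) ^ n = 1 := by
  have h : (ℓ : ZMod ℓ) * (p - 1) = p ^ n - 1 := by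
    rw [hℓ]
    push_cast
    exact geom_sum_mul _ _
  rw [ZMod.natCast_self, zero_mul] at h
  exact sub_eq_zero.1 h.symm

theorem stmt_16_general (p m ℓ : ℕ) (hp : p.Prime) (hm1 : (m + 1).Prime)
    (hmod : ¬ p ≡ 1 [MOD m + 1])
    (hℓ : ℓ = (p ^ (m + 1) - 1) / (p - 1)) :
    ∀ d : ZMod ℓ, d ≠ 0 →
      Nat.card {x : ZMod ℓ // ∃ k : ℕ, x = (p : ZMod ℓ) ^ k * d} = m + 1 := by
  intro d hd
  have := Fact.mk hm1
  rw [← Nat.geomSum_eq hp.two_le] at hℓ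
  have hunit : IsUnit ((p : ZMod ℓ) - 1) := by
    rw [← Nat.cast_pred hp.pos, ZMod.isUnit_iff_coprime, hℓ]
    exact Nat.coprime_sub_one_geomSum hp.one_le hm1 hmod
  have hper : IsPeriodicPt ((p : ZMod ℓ) * ·) (m + 1) d := by
    simp only [IsPeriodicPt, IsFixedPt, mul_left_iterate,
      ZMod.natCast_pow_eq_one_of_eq_geomSum hℓ, one_mul]
  have hfix : ¬ IsFixedPt ((p : ZMod ℓ) * ·) d := fun h =>
    hd <| hunit.mul_right_eq_zero.1 (by rw [sub_one_mul, sub_eq_zero]; exact h)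
  calc Nat.card {x : ZMod ℓ // ∃ k : ℕ, x = (p : ZMod ℓ) ^ k * d}
      = (Set.range (((p : ZMod ℓ) * ·)^[·] d)).ncard :=
        Nat.card_congr <| Equiv.subtypeEquivRight fun x => by simp [mul_left_iterate, eq_comm]
    _ = minimalPeriod ((p : ZMod ℓ) * ·) d :=
        ncard_range_iterate_eq_minimalPeriod (mk_mem_periodicPts m.succ_pos hper)
    _ = m + 1 := minimalPeriod_eq_prime hper hfix

/-- If `p` and `m + 1` are primes with `p ≠ m + 1` and `p ≢ 1 (mod m + 1)`, then every
nonzero `d ∈ ZMod ℓ`, `ℓ = (p^(m+1) - 1)/(p - 1)`, has orbit of length exactly `m + 1`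
under repeated multiplication by `p`. -/
theorem stmt_16 (p m ℓ : ℕ) (hp : p.Prime) (hm1 : (m + 1).Prime) (hm : 1 ≤ m)
    (hne : p ≠ m + 1) (hmod : ¬ p ≡ 1 [MOD m + 1])
    (hℓ : ℓ = (p ^ (m + 1) - 1) / (p - 1)) :
    ∀ d : ZMod ℓ, d ≠ 0 →
      Nat.card {x : ZMod ℓ // ∃ k : ℕ, x = (p : ZMod ℓ) ^ k * d} = m + 1 :=
  stmt_16_general p m ℓ hp hm1 hmod hℓ
end

section
/- Let p and m + 1 be primes with m ≥ 1, p ≠ m + 1 and p ≢ 1 (mod m + 1), and set ℓ = (p^(m+1) − 1)/(p − 1) and q = (p^m − 1)/(p − 1). Let D be a finset of ZMod ℓ with cardinality q whose image under the map x ↦ p·x equals D. Then 0 ∉ D, and D is a disjoint union of orbits under multiplication by p, each of cardinality exactly m + 1. -/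
/-!
Since `ℓ = 1 + p + ⋯ + p ^ m`, multiplication by `p` on `ZMod ℓ` satisfies `p ^ (m + 1) = 1`.
Its only fixed point is `0`: a fixed `x` is killed both by `p - 1` and by `ℓ`, which acts on it
as `m + 1`, and `m + 1`, `p - 1` are coprime because `p ≢ 1 (mod m + 1)`. Hence every other
orbit has the prime length `m + 1`, and an invariant set has cardinality congruent modulo `m + 1`
to its number of fixed points. By Fermat, `m + 1` divides `q = (p ^ m - 1) / (p - 1)`, so `D` cannot contain `0`.
-/

open Finset Function

theorem Finset.card_modEq_card_filter_isFixedPt {α : Type*} [DecidableEq α] {f : α → α}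
    {s : Finset α} {n : ℕ} [Fact n.Prime] (hs : Set.MapsTo f s s)
    (hf : ∀ x ∈ s, IsPeriodicPt f n x) :
    #s ≡ #{x ∈ s | IsFixedPt f x} [MOD n] := by
  let F : Function.End s := hs.restrict f s s
  have hF : F ^ n ^ 1 = 1 := by
    rw [pow_one, hom_coe_pow (fun g : Function.End s ↦ g) rfl (fun _ _ ↦ rfl) F n]
    funext x
    exact Subtype.ext ((hs.iterate_restrict n).symm ▸ hf x x.2 : _)
  have hfix : Fintype.card F.fixedPoints = #{x ∈ s | IsFixedPt f x} := by
    rw [← Fintype.card_coe]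
    exact Fintype.card_congr
      { toFun := fun x => ⟨x.1.1, mem_filter.2 ⟨x.1.2, congrArg Subtype.val x.2⟩⟩
        invFun := fun x => ⟨⟨x.1, (mem_filter.1 x.2).1⟩, Subtype.ext (mem_filter.1 x.2).2⟩
        left_inv := fun _ => rfl
        right_inv := fun _ => rfl }
  simpa [hfix] using Equiv.Perm.card_fixedPoints_modEq hF

theorem Function.natCard_setOf_exists_eq_iterate {α : Type*} {f : α → α} {x : α}
    (hx : x ∈ periodicPts f) :
    Nat.card {y // ∃ k : ℕ, y = f^[k] x} = minimalPeriod f x := by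
  have horbit : {y | ∃ k : ℕ, y = f^[k] x} = (f^[·] x) '' Set.Iio (minimalPeriod f x) := by
    ext y
    constructor
    · rintro ⟨k, rfl⟩
      exact ⟨k % minimalPeriod f x, Nat.mod_lt _ (minimalPeriod_pos_of_mem_periodicPts hx),
        iterate_mod_minimalPeriod_eq⟩
    · rintro ⟨k, -, rfl⟩
      exact ⟨k, rfl⟩
  rw [← Set.coe_ofPred, Nat.card_coe_set_eq, horbit, iterate_injOn_Iio_minimalPeriod.ncard_image]
  simp

section GeomSumEqZero

variable {R : Type*} [CommRing R] {a : R} {n : ℕ}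

theorem pow_eq_one_of_geom_sum_eq_zero (h : ∑ i ∈ range n, a ^ i = 0) : a ^ n = 1 := by
  rw [← sub_eq_zero, ← geom_sum_mul, h, zero_mul]

theorem isPeriodicPt_mul_left_of_geom_sum_eq_zero (h : ∑ i ∈ range n, a ^ i = 0) (x : R) :
    IsPeriodicPt (a * ·) n x := by
  simp only [IsPeriodicPt, IsFixedPt, mul_left_iterate, pow_eq_one_of_geom_sum_eq_zero h, one_mul]

theorem eq_zero_of_mul_eq_self_of_geom_sum_eq_zero (h : ∑ i ∈ range n, a ^ i = 0)
    (hcop : IsCoprime (n : R) (a - 1)) {x : R} (hx : a * x = x) : x = 0 := by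
  obtain ⟨u, v, huv⟩ := hcop
  have hpow (i : ℕ) : a ^ i * x = x := by
    simpa [IsFixedPt, mul_left_iterate] using (show IsFixedPt (a * ·) x from hx).iterate i
  have hn : (n : R) * x = 0 := calc
    (n : R) * x = ∑ i ∈ range n, a ^ i * x := by
      rw [sum_congr rfl fun i _ => hpow i, sum_const, card_range, nsmul_eq_mul]
    _ = 0 := by rw [← sum_mul, h, zero_mul]
  have hsub : (a - 1) * x = 0 := by rw [sub_mul, hx, one_mul, sub_self]
  calc x = (u * n + v * (a - 1)) * x := by rw [huv, one_mul]
    _ = 0 := by rw [add_mul, mul_assoc, mul_assoc, hn, hsub, mul_zero, mul_zero, add_zero]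

theorem minimalPeriod_mul_left_of_geom_sum_eq_zero [Fact n.Prime]
    (h : ∑ i ∈ range n, a ^ i = 0) (hcop : IsCoprime (n : R) (a - 1)) {x : R} (hx : x ≠ 0) :
    minimalPeriod (a * ·) x = n :=
  minimalPeriod_eq_prime (isPeriodicPt_mul_left_of_geom_sum_eq_zero h x)
    fun hfix => hx (eq_zero_of_mul_eq_self_of_geom_sum_eq_zero h hcop hfix)

theorem natCard_setOf_exists_eq_pow_mul_of_geom_sum_eq_zero [Fact n.Prime]
    (h : ∑ i ∈ range n, a ^ i = 0) (hcop : IsCoprime (n : R) (a - 1)) {x : R} (hx : x ≠ 0) :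
    Nat.card {y // ∃ k : ℕ, y = a ^ k * x} = n := by
  simp only [← mul_left_iterate]
  rw [natCard_setOf_exists_eq_iterate
      (mem_periodicPts.2
        ⟨n, (Fact.out : n.Prime).pos, isPeriodicPt_mul_left_of_geom_sum_eq_zero h x⟩),
    minimalPeriod_mul_left_of_geom_sum_eq_zero h hcop hx]

theorem zero_notMem_of_dvd_card_of_geom_sum_eq_zero [DecidableEq R] [Fact n.Prime]
    (h : ∑ i ∈ range n, a ^ i = 0) (hcop : IsCoprime (n : R) (a - 1)) {s : Finset R}
    (hs : Set.MapsTo (a * ·) s s) (hdvd : n ∣ #s) : 0 ∉ s := by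
  intro h0
  have hfix : {x ∈ s | IsFixedPt (a * ·) x} = {0} := by
    ext x
    simp only [mem_filter, mem_singleton]
    exact ⟨fun hx => eq_zero_of_mul_eq_self_of_geom_sum_eq_zero h hcop hx.2,
      fun hx => hx ▸ ⟨h0, mul_zero a⟩⟩
  have hmod := s.card_modEq_card_filter_isFixedPt hs
    fun x _ => isPeriodicPt_mul_left_of_geom_sum_eq_zero h x
  rw [hfix, card_singleton, Nat.ModEq, Nat.mod_eq_zero_of_dvd hdvd,
    Nat.one_mod_eq_one.2 (Fact.out : n.Prime).ne_one] at hmod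
  exact zero_ne_one hmod

end GeomSumEqZero

theorem Nat.Prime.dvd_geom_sum_sub_one {r b : ℕ} (hr : r.Prime) (hb : ¬r ∣ b)
    (hb1 : ¬b ≡ 1 [MOD r]) : r ∣ ∑ i ∈ range (r - 1), b ^ i := by
  have := Fact.mk hr
  have h0 : (b : ZMod r) ≠ 0 := by rwa [Ne, ZMod.natCast_eq_zero_iff]
  have h1 : (b : ZMod r) ≠ 1 := by rwa [Ne, ← Nat.cast_one, ZMod.natCast_eq_natCast_iff]
  rw [← ZMod.natCast_eq_zero_iff]
  push_cast
  rw [geom_sum_eq h1, ZMod.pow_card_sub_one_eq_one h0, sub_self, zero_div]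

theorem isCoprime_natCast_natCast_sub_one (R : Type*) [CommRing R] {r b : ℕ} (hr : r.Prime)
    (hb1 : ¬b ≡ 1 [MOD r]) : IsCoprime (r : R) ((b : R) - 1) := by
  have hℤ : IsCoprime (r : ℤ) ((b : ℤ) - 1) := by
    rw [(Nat.prime_iff_prime_int.mp hr).irreducible.coprime_iff_not_dvd,
      ← ZMod.intCast_zmod_eq_zero_iff_dvd]
    push_cast
    rwa [sub_eq_zero, ← Nat.cast_one, ZMod.natCast_eq_natCast_iff]
  simpa using hℤ.map (Int.castRingHom R)

theorem stmt_17_general (p m ℓ q : ℕ) (hp : p.Prime) (hm1 : (m + 1).Prime)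
    (hne : p ≠ m + 1) (hmod : ¬ p ≡ 1 [MOD m + 1])
    (hℓ : ℓ = (p ^ (m + 1) - 1) / (p - 1)) (hq : q = (p ^ m - 1) / (p - 1))
    (D : Finset (ZMod ℓ)) (hcard : D.card = q)
    (hfrob : D.image (fun x => (p : ZMod ℓ) * x) = D) :
    0 ∉ D ∧
      ∀ d ∈ D, {x : ZMod ℓ | ∃ k : ℕ, x = (p : ZMod ℓ) ^ k * d} ⊆ ↑D ∧
        Nat.card {x : ZMod ℓ // ∃ k : ℕ, x = (p : ZMod ℓ) ^ k * d} = m + 1 := by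
  have := Fact.mk hm1
  have hsum : ∑ i ∈ range (m + 1), (p : ZMod ℓ) ^ i = 0 := by
    rw [← ZMod.natCast_self ℓ, hℓ, ← Nat.geomSum_eq hp.two_le]
    norm_cast
  have hcop := isCoprime_natCast_natCast_sub_one (ZMod ℓ) hm1 hmod
  have hmaps : Set.MapsTo ((p : ZMod ℓ) * ·) D D := fun x hx => hfrob ▸ mem_image_of_mem _ hx
  have hdvd : m + 1 ∣ #D := by
    rw [hcard, hq, ← Nat.geomSum_eq hp.two_le]
    exact hm1.dvd_geom_sum_sub_one (fun h => hne ((Nat.prime_dvd_prime_iff_eq hm1 hp).1 h).symm)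
      hmod
  have h0 : 0 ∉ D := zero_notMem_of_dvd_card_of_geom_sum_eq_zero hsum hcop hmaps hdvd
  refine ⟨h0, fun d hd => ⟨?_, natCard_setOf_exists_eq_pow_mul_of_geom_sum_eq_zero hsum hcop
    (ne_of_mem_of_not_mem hd h0)⟩⟩
  rintro _ ⟨k, rfl⟩
  exact congrFun (mul_left_iterate _ k) d ▸ hmaps.iterate k hd

/-- Lemma 4.2: under the hypotheses on the primes `p` and `m + 1`, a Frobenius difference
set `D ⊆ ZMod ℓ` of cardinality `q` does not contain `0`, and is a (disjoint) union of
orbits under multiplication by `p`, each of cardinality exactly `m + 1`. -/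
theorem stmt_17 (p m ℓ q : ℕ) (hp : p.Prime) (hm1 : (m + 1).Prime) (hm : 1 ≤ m)
    (hne : p ≠ m + 1) (hmod : ¬ p ≡ 1 [MOD m + 1])
    (hℓ : ℓ = (p ^ (m + 1) - 1) / (p - 1)) (hq : q = (p ^ m - 1) / (p - 1))
    (D : Finset (ZMod ℓ)) (hcard : D.card = q)
    (hfrob : D.image (fun x => (p : ZMod ℓ) * x) = D) :
    0 ∉ D ∧
      ∀ d ∈ D, {x : ZMod ℓ | ∃ k : ℕ, x = (p : ZMod ℓ) ^ k * d} ⊆ ↑D ∧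
        Nat.card {x : ZMod ℓ // ∃ k : ℕ, x = (p : ZMod ℓ) ^ k * d} = m + 1 :=
  stmt_17_general p m ℓ q hp hm1 hne hmod hℓ hq D hcard hfrob
end

section
/- Let p and m + 1 be primes with m ≥ 1, p ≠ m + 1 and p ≢ 1 (mod m + 1), and set ℓ = (p^(m+1) − 1)/(p − 1) and q = (p^m − 1)/(p − 1). Let D be a finset of ZMod ℓ with cardinality q whose image under x ↦ p·x equals D. Then for every w ∈ ZMod ℓ, every d ∈ D, and every natural number u with 1 ≤ u ≤ m, it is not the case that both p^u · w = w and p^u · (w + d) = w + d. In other words, the cyclic group of order m+1 generated by multiplication by p acts freely on the edges (w, w + d) of the associated Wada dessin. -/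
/-- Orbit counting: if a prime-order cyclic group generated by multiplication by `a`
acts on a finset `D` whose only possible fixed point is `0`, and `0 ∈ D`, then
`D.card ≡ 1 [MOD n]`. -/
lemma wada_card_modEq (n L : ℕ) (hn : n.Prime) (a : ZMod L) (ha : a ^ n = 1)
    (D : Finset (ZMod L)) (hD : ∀ x ∈ D, a * x ∈ D)
    (hfix : ∀ x ∈ D, a * x = x → x = 0) (h0 : (0 : ZMod L) ∈ D) :
    D.card ≡ 1 [MOD n] := by
  haveI : Fact n.Prime := ⟨hn⟩
  haveI : NeZero n := ⟨hn.ne_zero⟩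
  haveI : Fact (1 < n) := ⟨hn.one_lt⟩
  have hpow : ∀ (k : ℕ) (x : ZMod L), x ∈ D → a ^ k * x ∈ D := by
    intro k
    induction k with
    | zero => intro x hx; simpa using hx
    | succ k ih =>
      intro x hx
      have : a ^ (k + 1) * x = a * (a ^ k * x) := by ring
      rw [this]
      exact hD _ (ih x hx)
  letI : SMul (Multiplicative (ZMod n)) {x // x ∈ D} :=
    ⟨fun g x => ⟨a ^ (Multiplicative.toAdd g).val * x.1, hpow _ _ x.2⟩⟩
  letI : MulAction (Multiplicative (ZMod n)) {x // x ∈ D} :=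
    { one_smul := by
        intro x
        apply Subtype.ext
        show a ^ (Multiplicative.toAdd (1 : Multiplicative (ZMod n))).val * x.1 = x.1
        simp
      mul_smul := by
        intro g h x
        apply Subtype.ext
        show a ^ (Multiplicative.toAdd (g * h)).val * x.1
            = a ^ (Multiplicative.toAdd g).val * (a ^ (Multiplicative.toAdd h).val * x.1)
        rw [toAdd_mul, ZMod.val_add, ← pow_eq_pow_mod _ ha, ← mul_assoc, ← pow_add] }
  have hG : IsPGroup n (Multiplicative (ZMod n)) := by
    apply IsPGroup.of_card (n := 1)
    simp [Nat.card_eq_fintype_card, ZMod.card]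
  have key := hG.card_modEq_card_fixedPoints {x // x ∈ D}
  have hfp : MulAction.fixedPoints (Multiplicative (ZMod n)) {x // x ∈ D}
      = {⟨0, h0⟩} := by
    ext x
    simp only [MulAction.mem_fixedPoints, Set.mem_singleton_iff]
    constructor
    · intro h
      have h1 := h (Multiplicative.ofAdd (1 : ZMod n))
      have h2 : a ^ (Multiplicative.toAdd (Multiplicative.ofAdd (1 : ZMod n))).val * x.1
          = x.1 := congrArg Subtype.val h1
      rw [toAdd_ofAdd, ZMod.val_one, pow_one] at h2
      exact Subtype.ext (hfix _ x.2 h2)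
    · intro h g
      subst h
      apply Subtype.ext
      show a ^ (Multiplicative.toAdd g).val * (0 : ZMod L) = 0
      exact mul_zero _
  rw [Nat.card_eq_fintype_card, Fintype.card_coe, hfp] at key
  simpa [Nat.card_coe_set_eq, Set.ncard_singleton] using key

/-- Free action of the Frobenius group on the edges of the Wada dessin: under the
hypotheses on the primes `p` and `m + 1`, for a Frobenius difference set `D ⊆ ZMod ℓ`
of cardinality `q`, no nontrivial power `p^u` (`1 ≤ u ≤ m`) fixes an edge `(w, w + d)`
with `d ∈ D`, i.e. it cannot fix both endpoints. -/
theorem stmt_19 (p m ℓ q : ℕ) (hp : p.Prime) (hm1 : (m + 1).Prime) (hm : 1 ≤ m)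
    (hne : p ≠ m + 1) (hmod : ¬ p ≡ 1 [MOD m + 1])
    (hℓ : ℓ = (p ^ (m + 1) - 1) / (p - 1)) (hq : q = (p ^ m - 1) / (p - 1))
    (D : Finset (ZMod ℓ)) (hcard : D.card = q)
    (hfrob : D.image (fun x => (p : ZMod ℓ) * x) = D) :
    ∀ w : ZMod ℓ, ∀ d ∈ D, ∀ u : ℕ, 1 ≤ u → u ≤ m →
      ¬ ((p : ZMod ℓ) ^ u * w = w ∧ (p : ZMod ℓ) ^ u * (w + d) = w + d) := by
  have hp2 : 2 ≤ p := hp.two_le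
  have hL1 : ℓ * (p - 1) = p ^ (m + 1) - 1 := by
    rw [hℓ]
    exact Nat.div_mul_cancel (by simpa using Nat.sub_dvd_pow_sub_pow p 1 (m + 1))
  have hLsum : ℓ = ∑ i ∈ Finset.range (m + 1), p ^ i := by
    rw [hℓ, Nat.geomSum_eq hp2]
  have hple : p ≤ p ^ (m + 1) := Nat.le_self_pow (by omega) p
  have hLne : ℓ ≠ 0 := by
    intro h
    rw [h, zero_mul] at hL1
    omega
  haveI : NeZero ℓ := ⟨hLne⟩
  -- coprimality of `p^u - 1` and `ℓ` for `1 ≤ u ≤ m`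
  have hcop : ∀ u : ℕ, 1 ≤ u → u ≤ m → Nat.Coprime (p ^ u - 1) ℓ := by
    intro u hu1 hum
    by_contra hcon
    obtain ⟨r, hr, hr1, hr2⟩ := Nat.Prime.not_coprime_iff_dvd.mp hcon
    haveI : Fact r.Prime := ⟨hr⟩
    have hcast : ∀ k : ℕ, r ∣ p ^ k - 1 → (p : ZMod r) ^ k = 1 := by
      intro k hk
      have h1 : 1 ≤ p ^ k := Nat.one_le_pow _ _ (by omega)
      have := (ZMod.natCast_eq_zero_iff _ r).mpr hk
      rw [Nat.cast_sub h1] at this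
      push_cast at this
      linear_combination this
    have hpu : (p : ZMod r) ^ u = 1 := hcast u hr1
    have hpm1 : (p : ZMod r) ^ (m + 1) = 1 := by
      refine hcast (m + 1) (hr2.trans ⟨p - 1, hL1.symm⟩)
    have hord1 : orderOf ((p : ZMod r)) ∣ u := orderOf_dvd_of_pow_eq_one hpu
    have hord2 : orderOf ((p : ZMod r)) ∣ m + 1 := orderOf_dvd_of_pow_eq_one hpm1
    rcases (Nat.Prime.eq_one_or_self_of_dvd hm1 _ hord2) with h | h
    · have hp1 : (p : ZMod r) = 1 := orderOf_eq_one_iff.mp h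
      have hz : ((ℓ : ℕ) : ZMod r) = 0 := (ZMod.natCast_eq_zero_iff _ r).mpr hr2
      rw [hLsum] at hz
      push_cast at hz
      simp only [hp1, one_pow, Finset.sum_const, Finset.card_range, nsmul_eq_mul,
        mul_one] at hz
      have hrm : r ∣ m + 1 := by
        have : (((m + 1 : ℕ)) : ZMod r) = 0 := by exact_mod_cast hz
        exact (ZMod.natCast_eq_zero_iff _ r).mp this
      have hreq : r = m + 1 := (Nat.prime_dvd_prime_iff_eq hr hm1).mp hrm
      apply hmod
      rw [← ZMod.natCast_eq_natCast_iff]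
      subst hreq
      exact_mod_cast hp1
    · have : m + 1 ≤ u := Nat.le_of_dvd (by omega) (h ▸ hord1)
      omega
  -- the only fixed point of `x ↦ p^u x` is `0`
  have hunit : ∀ u : ℕ, 1 ≤ u → u ≤ m → ∀ x : ZMod ℓ,
      (p : ZMod ℓ) ^ u * x = x → x = 0 := by
    intro u h1 h2 x hx
    have hu : IsUnit ((p ^ u - 1 : ℕ) : ZMod ℓ) :=
      (ZMod.isUnit_iff_coprime _ _).mpr (hcop u h1 h2)
    have hz : ((p ^ u - 1 : ℕ) : ZMod ℓ) * x = 0 := by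
      rw [Nat.cast_sub (Nat.one_le_pow _ _ (by omega))]
      push_cast
      rw [sub_mul, one_mul, hx, sub_self]
    exact (hu.mul_right_eq_zero).mp hz
  have hpow1 : (p : ZMod ℓ) ^ (m + 1) = 1 := by
    have hdvd : ℓ ∣ p ^ (m + 1) - 1 := ⟨p - 1, hL1.symm⟩
    have := (ZMod.natCast_eq_zero_iff _ ℓ).mpr hdvd
    rw [Nat.cast_sub (Nat.one_le_pow _ _ (by omega))] at this
    push_cast at this
    linear_combination this
  have hmem : ∀ x ∈ D, (p : ZMod ℓ) * x ∈ D := fun x hx =>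
    hfrob ▸ Finset.mem_image_of_mem _ hx
  -- `0 ∉ D`
  have h0notin : (0 : ZMod ℓ) ∉ D := by
    intro h0
    have key := wada_card_modEq (m + 1) ℓ hm1 ((p : ZMod ℓ)) hpow1 D hmem
      (fun x hx hfx => hunit 1 le_rfl hm x (by simpa using hfx)) h0
    rw [hcard] at key
    haveI : Fact (m + 1).Prime := ⟨hm1⟩
    have hqm : q * (p - 1) = p ^ m - 1 := by
      rw [hq]
      exact Nat.div_mul_cancel (by simpa using Nat.sub_dvd_pow_sub_pow p 1 m)
    have hpne : (p : ZMod (m + 1)) ≠ 0 := by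
      rw [Ne, ZMod.natCast_eq_zero_iff]
      intro hdvd
      exact hne ((Nat.prime_dvd_prime_iff_eq hm1 hp).mp hdvd).symm
    have hfermat : (p : ZMod (m + 1)) ^ m = 1 := by
      have := ZMod.pow_card_sub_one_eq_one hpne
      simpa [ZMod.card] using this
    have hcast : ((q * (p - 1) : ℕ) : ZMod (m + 1)) = 0 := by
      rw [hqm, Nat.cast_sub (Nat.one_le_pow _ _ (by omega))]
      push_cast
      rw [hfermat, sub_self]
    have hp1ne : ((p - 1 : ℕ) : ZMod (m + 1)) ≠ 0 := by
      intro h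
      apply hmod
      have hdvd := (ZMod.natCast_eq_zero_iff _ _).mp h
      exact ((Nat.modEq_iff_dvd' hp.one_le).mpr hdvd).symm
    have hq0 : ((q : ℕ) : ZMod (m + 1)) = 0 := by
      push_cast at hcast
      rcases mul_eq_zero.mp hcast with h | h
      · exact_mod_cast h
      · exact absurd h hp1ne
    have hdvdq : (m + 1) ∣ q := (ZMod.natCast_eq_zero_iff _ _).mp hq0
    have h01 : (0 : ℕ) ≡ 1 [MOD m + 1] :=
      ((Nat.modEq_zero_iff_dvd).mpr hdvdq).symm.trans key
    have := h01
    simp only [Nat.ModEq, Nat.zero_mod] at this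
    rw [Nat.mod_eq_of_lt (by omega)] at this
    omega
  intro w d hd u hu1 hum ⟨h1, h2⟩
  have hw := hunit u hu1 hum w h1
  have hwd := hunit u hu1 hum (w + d) h2
  have hd0 : d = 0 := by
    rw [hw, zero_add] at hwd
    exact hwd
  rw [hd0] at hd
  exact h0notin hd
end
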